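/- arXiv:1508.07230 — 9 statements merged into one kernel-verified Lean document; each statement's English description precedes it below -/
import Mathlib

section
/- With γ := (2 − 1/ln 2)⁻¹, there exist a constant C > 0 and a threshold x₀ > 0 such that for all x ≥ x₀, P(Z ≤ −x) ≥ exp(−exp(γ·x + ln(ln x) + C)). (Lower bound of Theorem 1(i): left tail of the limiting Quicksort distribution.) -/
/-!
Write `F y = P(Z ≤ y)` and `b = 2 log 2 - 1`. With probability `2δ` the pivot `U` lies within `δ`
of `1/2`, where the toll satisfies `g U ≤ -b + 8δ²`; if moreover `Z', Z'' ≤ y`, the fixed-point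
equation puts `Z ≤ y - (b - 8δ²)`. Independence gives `2δ F(y)² ≤ F(y - (b - 8δ²))`, so that
`n` iterations starting from a point `s` with `F s > 0` give `F(s - n(b - 8δ²)) ≥ (2δ F s)^(2^n)`.
Taking `δ = 1/x` and `n ≈ x/b` reaches `-x` with `2^n ≈ exp (log 2 / b · x)` and
`-log (2δ F s) ≈ log x`.
-/

open MeasureTheory ProbabilityTheory Real

theorem two_mul_mul_log_add_le {u : ℝ} (hu0 : 0 < u) (hu1 : u < 1) :
    2 * u * log u + 2 * (1 - u) * log (1 - u) + 1 ≤ 1 - 2 * log 2 + 2 * (2 * u - 1) ^ 2 := by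
  have h₁ := log_le_sub_one_of_pos (by positivity : 0 < 2 * u)
  have h₂ := log_le_sub_one_of_pos (by linarith : 0 < 2 * (1 - u))
  rw [log_mul two_ne_zero hu0.ne'] at h₁
  rw [log_mul two_ne_zero (by linarith)] at h₂
  nlinarith [mul_le_mul_of_nonneg_left h₁ hu0.le,
    mul_le_mul_of_nonneg_left h₂ (sub_nonneg.2 hu1.le)]

theorem pow_two_pow_le_of_sq_le_succ {R : Type*} [CommSemiring R] [PartialOrder R]
    [IsOrderedRing R] {u : ℕ → R} (h0 : 0 ≤ u 0) (h : ∀ n, u n ^ 2 ≤ u (n + 1)) (n : ℕ) :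
    u 0 ^ 2 ^ n ≤ u n := by
  induction n with
  | zero => simp
  | succ n ih =>
    calc u 0 ^ 2 ^ (n + 1) = (u 0 ^ 2 ^ n) ^ 2 := by rw [pow_succ, pow_mul]
      _ ≤ u n ^ 2 := by gcongr
      _ ≤ u (n + 1) := h n

theorem mul_pow_two_pow_le_of_mul_sq_le {G : ℝ → ℝ} {a c : ℝ} (hG : ∀ y, 0 ≤ G y)
    (hc₀ : 0 ≤ c) (hc₁ : c ≤ 1) (hstep : ∀ y, c * G y ^ 2 ≤ G (y - a)) (t : ℝ) (n : ℕ) :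
    (c * G t) ^ 2 ^ n ≤ G (t - n * a) := by
  have hsq : ∀ k : ℕ, (c * G (t - k * a)) ^ 2 ≤ c * G (t - (k + 1 : ℕ) * a) := fun k ↦ by
    calc (c * G (t - k * a)) ^ 2 = c * (c * G (t - k * a) ^ 2) := by ring
      _ ≤ c * G (t - k * a - a) := by gcongr; exact hstep _
      _ = c * G (t - (k + 1 : ℕ) * a) := by push_cast; ring_nf
  calc (c * G t) ^ 2 ^ n = (c * G (t - (0 : ℕ) * a)) ^ 2 ^ n := by simp
    _ ≤ c * G (t - n * a) :=
      pow_two_pow_le_of_sq_le_succ (u := fun k ↦ c * G (t - k * a)) (mul_nonneg hc₀ (hG _)) hsq n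
    _ ≤ G (t - n * a) := mul_le_of_le_one_left (hG _) hc₁

theorem two_pow_mul_log_le_exp {p s x b : ℝ} {n : ℕ} (hp : 0 < p) (hx : exp 1 ≤ x)
    (hn : n ≤ (x + s) / b + 2) :
    2 ^ n * log (x / (2 * p)) ≤
      exp (log 2 / b * x + log (log x) + (log 2 / b * s + 2 * log 2 + log (1 + |log (2 * p)|))) := by
  have hx0 : 0 < x := (exp_pos 1).trans_le hx
  have hlogx : 1 ≤ log x := (le_log_iff_exp_le hx0).2 hx
  have h2n : (2 : ℝ) ^ n ≤ exp (log 2 / b * (x + s) + 2 * log 2) := by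
    rw [← exp_log (by positivity : (0 : ℝ) < 2 ^ n), log_pow]
    gcongr
    calc (n : ℝ) * log 2 ≤ ((x + s) / b + 2) * log 2 := by gcongr
      _ = _ := by ring
  have hlog : log (x / (2 * p)) ≤ (1 + |log (2 * p)|) * log x := by
    rw [log_div hx0.ne' (by positivity)]
    nlinarith [neg_abs_le (log (2 * p)), abs_nonneg (log (2 * p))]
  calc 2 ^ n * log (x / (2 * p)) ≤ 2 ^ n * ((1 + |log (2 * p)|) * log x) := by gcongr
    _ ≤ exp (log 2 / b * (x + s) + 2 * log 2) * ((1 + |log (2 * p)|) * log x) := by gcongr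
    _ = _ := by
        rw [← exp_log (by positivity : 0 < (1 + |log (2 * p)|) * log x), ← exp_add,
          log_mul (by positivity) (by positivity)]
        ring_nf

theorem sub_nat_mul_le_neg {b s x : ℝ} {n : ℕ} (hb : 0 < b) (hs : 0 ≤ s)
    (hx : s + b + 32 / b ^ 2 ≤ x) (hn_ge : (x + s) / b + 1 ≤ n) (hn_le : n ≤ (x + s) / b + 2) :
    s - n * (b - 8 * (1 / x) ^ 2) ≤ -x := by
  have hb2 : 0 < 32 / b ^ 2 := by positivity
  have hx0 : 0 < x := by linarith
  have hb2x : 32 ≤ b ^ 2 * x := by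
    rw [← div_le_iff₀' (by positivity)]
    linarith
  have h8n : 8 * n ≤ b * x ^ 2 := by
    have hbn : b * n ≤ x + s + b * 2 := by
      have := mul_le_mul_of_nonneg_left hn_le hb.le
      rwa [mul_add, mul_div_cancel₀ _ hb.ne'] at this
    have hbx : 32 * x ≤ b * (b * x ^ 2) := by nlinarith
    refine le_of_mul_le_mul_left ?_ hb
    linarith
  have hnb : x + s + b ≤ n * b := by
    have := mul_le_mul_of_nonneg_right hn_ge hb.le
    rwa [add_mul, div_mul_cancel₀ _ hb.ne', one_mul] at this
  have hloss : n * (8 * (1 / x) ^ 2) ≤ b := by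
    rw [div_pow, one_pow, mul_one_div, ← mul_div_assoc, div_le_iff₀ (by positivity)]
    linarith
  nlinarith

theorem exists_exp_neg_exp_le_of_sq_step {G : ℝ → ℝ} {b : ℝ} (hb : 0 < b) (hmono : Monotone G)
    (hG : ∀ y, 0 ≤ G y) (hpos : ∃ s, 0 < G s)
    (hstep : ∀ δ, 0 < δ → δ < 1 / 2 → ∀ y, 2 * δ * G y ^ 2 ≤ G (y - (b - 8 * δ ^ 2))) :
    ∃ C > 0, ∃ x₀ > 0, ∀ x ≥ x₀, exp (-exp (log 2 / b * x + log (log x) + C)) ≤ G (-x) := by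
  obtain ⟨s₀, hs₀⟩ := hpos
  set s := max s₀ 0
  set p := G s
  have hp : 0 < p := hs₀.trans_le (hmono (le_max_left _ _))
  have hs : 0 ≤ s := le_max_right _ _
  have hC : 0 < log 2 / b * s + 2 * log 2 + log (1 + |log (2 * p)|) :=
    add_pos_of_pos_of_nonneg (by positivity) (log_nonneg (by linarith [abs_nonneg (log (2 * p))]))
  refine ⟨_, hC, s + b + 32 / b ^ 2 + 3, by positivity, fun x hx ↦ ?_⟩
  have hx3 : 3 ≤ x := by linarith [show 0 < 32 / b ^ 2 by positivity]
  have hx0 : 0 < x := by linarith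
  -- `δ = 1 / x` keeps the total drift loss `8 δ² n` below `b` at the price of a factor `log x`.
  have hδ : 1 / x < 1 / 2 := by
    rw [div_lt_div_iff₀ hx0 two_pos]
    linarith
  set n := ⌈(x + s) / b⌉₊ + 1
  have hn_le : (n : ℝ) ≤ (x + s) / b + 2 := by
    have := Nat.ceil_lt_add_one (by positivity : 0 ≤ (x + s) / b)
    push_cast [n]
    linarith
  have hn_ge : (x + s) / b + 1 ≤ n := by
    push_cast [n]
    linarith [Nat.le_ceil ((x + s) / b)]
  have hpow : exp (-(2 ^ n * log (x / (2 * p)))) = (2 * (1 / x) * p) ^ 2 ^ n := by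
    rw [show 2 * (1 / x) * p = exp (-log (x / (2 * p))) by
      rw [exp_neg, exp_log (by positivity)]; field_simp, ← exp_nat_mul]
    push_cast
    ring_nf
  calc exp (-exp (log 2 / b * x + log (log x) +
          (log 2 / b * s + 2 * log 2 + log (1 + |log (2 * p)|))))
      ≤ exp (-(2 ^ n * log (x / (2 * p)))) := by
        gcongr
        exact two_pow_mul_log_le_exp hp (by linarith [exp_one_lt_d9]) hn_le
    _ = (2 * (1 / x) * p) ^ 2 ^ n := hpow
    _ ≤ G (s - n * (b - 8 * (1 / x) ^ 2)) :=
      mul_pow_two_pow_le_of_mul_sq_le hG (by positivity) (by linarith)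
        (hstep _ (by positivity) hδ) s n
    _ ≤ G (-x) := hmono (sub_nat_mul_le_neg hb hs (by linarith) hn_ge hn_le)

theorem exists_measureReal_le_pos {Ω : Type*} [MeasurableSpace Ω] (μ : Measure Ω)
    [IsFiniteMeasure μ] [NeZero μ] (X : Ω → ℝ) : ∃ s : ℝ, 0 < μ.real {ω | X ω ≤ s} := by
  have hcover : (⋃ n : ℕ, {ω | X ω ≤ n}) = Set.univ :=
    Set.eq_univ_of_forall fun ω ↦ Set.mem_iUnion.2 (exists_nat_ge (X ω))
  obtain ⟨n, hn⟩ := exists_measure_pos_of_not_measure_iUnion_null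
    (μ := μ) (by rw [hcover]; exact NeZero.ne _)
  exact ⟨n, ENNReal.toReal_pos hn.ne' (measure_ne_top μ _)⟩

section FixedPoint

variable {Ω β : Type*} [MeasurableSpace Ω] [MeasurableSpace β] {μ : Measure Ω}

theorem measureReal_preimage_Icc_of_map_eq_uniform {U : Ω → ℝ} (hUm : Measurable U)
    (hU : Measure.map U μ = volume.restrict (Set.Icc (0 : ℝ) 1)) {c d : ℝ} (hc : 0 ≤ c)
    (hcd : c ≤ d) (hd : d ≤ 1) : μ.real (U ⁻¹' Set.Icc c d) = d - c := by
  rw [← map_measureReal_apply hUm measurableSet_Icc, hU,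
    measureReal_restrict_apply measurableSet_Icc,
    Set.inter_eq_left.2 (Set.Icc_subset_Icc hc hd), Real.volume_real_Icc_of_le hcd]

theorem measureReal_inter_preimage_eq_mul_of_iIndepFun {X Y W : Ω → β}
    (hindep : iIndepFun (β := fun _ : Fin 3 => β) ![X, Y, W] μ) {A B D : Set β}
    (hA : MeasurableSet A) (hB : MeasurableSet B) (hD : MeasurableSet D) :
    μ.real (X ⁻¹' A ∩ Y ⁻¹' B ∩ W ⁻¹' D) =
      μ.real (X ⁻¹' A) * μ.real (Y ⁻¹' B) * μ.real (W ⁻¹' D) := by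
  have h := hindep.measure_inter_preimage_eq_mul Finset.univ (sets := ![A, B, D])
    (fun i _ ↦ by fin_cases i <;> assumption)
  have hinter : (⋂ i, ![X, Y, W] i ⁻¹' ![A, B, D] i) = X ⁻¹' A ∩ Y ⁻¹' B ∩ W ⁻¹' D := by
    ext ω
    simp [Fin.forall_fin_succ, and_assoc]
  simp only [Fin.prod_univ_three, Finset.mem_univ, Set.iInter_true, hinter] at h
  simp [measureReal_def, h, ENNReal.toReal_mul]

theorem measureReal_congr_identDistrib {X Y : Ω → β} (h : IdentDistrib X Y μ μ) {s : Set β}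
    (hs : MeasurableSet s) : μ.real (X ⁻¹' s) = μ.real (Y ⁻¹' s) :=
  congrArg ENNReal.toReal (h.measure_mem_eq hs)

theorem quicksort_two_mul_cdf_sq_le [IsFiniteMeasure μ] {Z Z' Z'' U : Ω → ℝ} {g : ℝ → ℝ}
    (hg : ∀ u : ℝ, g u = 2 * u * Real.log u + 2 * (1 - u) * Real.log (1 - u) + 1)
    (hUm : Measurable U)
    (hZ' : IdentDistrib Z' Z μ μ) (hZ'' : IdentDistrib Z'' Z μ μ)
    (hU : Measure.map U μ = volume.restrict (Set.Icc (0 : ℝ) 1))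
    (hindep : iIndepFun (β := fun _ : Fin 3 => ℝ) ![U, Z', Z''] μ)
    (hrec : IdentDistrib Z (fun ω => U ω * Z' ω + (1 - U ω) * Z'' ω + g (U ω)) μ μ)
    {δ : ℝ} (hδ0 : 0 < δ) (hδ : δ < 1 / 2) (y : ℝ) :
    2 * δ * μ.real {ω | Z ω ≤ y} ^ 2 ≤ μ.real {ω | Z ω ≤ y - (2 * log 2 - 1 - 8 * δ ^ 2)} := by
  change 2 * δ * μ.real (Z ⁻¹' Set.Iic y) ^ 2 ≤ μ.real (Z ⁻¹' Set.Iic _)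
  set I := Set.Icc (1 / 2 - δ) (1 / 2 + δ)
  have hevent : U ⁻¹' I ∩ Z' ⁻¹' Set.Iic y ∩ Z'' ⁻¹' Set.Iic y ⊆
      (fun ω ↦ U ω * Z' ω + (1 - U ω) * Z'' ω + g (U ω)) ⁻¹'
        Set.Iic (y - (2 * log 2 - 1 - 8 * δ ^ 2)) := by
    rintro ω ⟨⟨⟨hu₁, hu₂⟩, hZ'y : Z' ω ≤ y⟩, hZ''y : Z'' ω ≤ y⟩
    have hg_le := hg (U ω) ▸ two_mul_mul_log_add_le (u := U ω) (by linarith) (by linarith)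
    simp only [Set.mem_preimage, Set.mem_Iic]
    nlinarith [mul_le_mul_of_nonneg_left hZ'y (by linarith : 0 ≤ U ω),
      mul_le_mul_of_nonneg_left hZ''y (by linarith : 0 ≤ 1 - U ω)]
  calc 2 * δ * μ.real (Z ⁻¹' Set.Iic y) ^ 2
      = μ.real (U ⁻¹' I ∩ Z' ⁻¹' Set.Iic y ∩ Z'' ⁻¹' Set.Iic y) := by
        rw [measureReal_inter_preimage_eq_mul_of_iIndepFun hindep measurableSet_Icc
          measurableSet_Iic measurableSet_Iic,
          measureReal_preimage_Icc_of_map_eq_uniform hUm hU (by linarith) (by linarith)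
            (by linarith),
          measureReal_congr_identDistrib hZ' measurableSet_Iic,
          measureReal_congr_identDistrib hZ'' measurableSet_Iic]
        ring
    _ ≤ _ := measureReal_mono hevent
    _ = _ := (measureReal_congr_identDistrib hrec measurableSet_Iic).symm

end FixedPoint

theorem quicksort_left_tail_lower_bound_general
    {Ω : Type*} [MeasureSpace Ω] [IsProbabilityMeasure (ℙ : Measure Ω)]
    (Z Z' Z'' U : Ω → ℝ) (g : ℝ → ℝ)
    (hg : ∀ u : ℝ, g u = 2 * u * Real.log u + 2 * (1 - u) * Real.log (1 - u) + 1)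
    (hUm : Measurable U)
    (hZ' : IdentDistrib Z' Z ℙ ℙ) (hZ'' : IdentDistrib Z'' Z ℙ ℙ)
    (hU : Measure.map U ℙ = volume.restrict (Set.Icc (0 : ℝ) 1))
    (hindep : iIndepFun (β := fun _ : Fin 3 => ℝ) ![U, Z', Z''] ℙ)
    (hrec : IdentDistrib Z (fun ω => U ω * Z' ω + (1 - U ω) * Z'' ω + g (U ω)) ℙ ℙ) :
    ∃ C > (0 : ℝ), ∃ x₀ > (0 : ℝ), ∀ x ≥ x₀,
      Real.exp (-Real.exp ((2 - 1 / Real.log 2)⁻¹ * x + Real.log (Real.log x) + C))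
        ≤ (ℙ {ω | Z ω ≤ -x}).toReal := by
  have hb : 0 < 2 * log 2 - 1 := by linarith [log_two_gt_d9]
  have hγ : (2 - 1 / log 2)⁻¹ = log 2 / (2 * log 2 - 1) := by
    have : log 2 ≠ 0 := by positivity
    field_simp
  have hmono : Monotone fun y ↦ (ℙ : Measure Ω).real {ω | Z ω ≤ y} :=
    fun _ _ hst ↦ measureReal_mono fun _ (h : Z _ ≤ _) ↦ h.trans hst
  rw [hγ]
  exact exists_exp_neg_exp_le_of_sq_step hb hmono (fun _ ↦ measureReal_nonneg)
    (exists_measureReal_le_pos ℙ Z)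
    (fun _ hδ0 hδ y ↦ quicksort_two_mul_cdf_sq_le hg hUm hZ' hZ'' hU hindep hrec hδ0 hδ y)

/-- Lower bound of Theorem 1(i) (left tail of the limiting Quicksort
distribution): with `γ := (2 - 1/ln 2)⁻¹`, there are `C > 0` and `x₀ > 0` such that
for all `x ≥ x₀`, `P(Z ≤ -x) ≥ exp(-exp(γ·x + ln ln x + C))`. -/
theorem quicksort_left_tail_lower_bound
    {Ω : Type*} [MeasureSpace Ω] [IsProbabilityMeasure (ℙ : Measure Ω)]
    (Z Z' Z'' U : Ω → ℝ) (g : ℝ → ℝ)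
    (hg : ∀ u : ℝ, g u = 2 * u * Real.log u + 2 * (1 - u) * Real.log (1 - u) + 1)
    (hZm : Measurable Z) (hZ'm : Measurable Z') (hZ''m : Measurable Z'')
    (hUm : Measurable U)
    (hZ' : IdentDistrib Z' Z ℙ ℙ) (hZ'' : IdentDistrib Z'' Z ℙ ℙ)
    (hU : Measure.map U ℙ = volume.restrict (Set.Icc (0 : ℝ) 1))
    (hindep : iIndepFun (β := fun _ : Fin 3 => ℝ) ![U, Z', Z''] ℙ)
    (hrec : IdentDistrib Z (fun ω => U ω * Z' ω + (1 - U ω) * Z'' ω + g (U ω)) ℙ ℙ)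
    (hmean : ∫ ω, Z ω ∂ℙ = 0)
    (hmgf : ∀ t : ℝ, Integrable (fun ω => Real.exp (t * Z ω)) ℙ) :
    ∃ C > (0 : ℝ), ∃ x₀ > (0 : ℝ), ∀ x ≥ x₀,
      Real.exp (-Real.exp ((2 - 1 / Real.log 2)⁻¹ * x + Real.log (Real.log x) + C))
        ≤ (ℙ {ω | Z ω ≤ -x}).toReal :=
  quicksort_left_tail_lower_bound_general Z Z' Z'' U g hg hUm hZ' hZ'' hU hindep hrec
end

section
/- With γ := (2 − 1/ln 2)⁻¹, there exist a constant C > 0 and a threshold x₀ > 0 such that for all x ≥ x₀, P(Z ≤ −x) ≤ exp(−exp(γ·x − C)). (Upper bound of Theorem 1(i): left tail of the limiting Quicksort distribution.) -/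
/-!
Let `L t = E[exp (-t Z)]` and `H` the binary entropy, so that `g = 1 - 2 H`. The fixed-point
equation gives `L t = ∫₀¹ exp (-t g u) L (t u) L (t (1 - u)) du`. With `a = 2 - 1 / log 2`, the
exponent of `G t = exp (a t log t + b t)` satisfies
`a (tu) log (tu) + a (t(1-u)) log (t(1-u)) - t g u = a t log t - t (1 - H u / log 2)`,
and the loss `1 - H u / log 2` is positive except at `u = 1/2`, so
`∫₀¹ exp (-t (1 - H u / log 2)) du → 0`. Hence for large `t` the recursion maps the bound
`L ≤ G` on `[0, t)` to the strict bound `L t < G t`, and a continuous induction, started by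
choosing `b` large on a compact range, gives `L ≤ G` everywhere. Chernoff's bound with
`t = exp ((x - C) / a)` turns this into the doubly exponential left tail.
-/

open MeasureTheory ProbabilityTheory Real Set Filter Topology

theorem le_of_continuous_induction {f g : ℝ → ℝ} (hf : Continuous f) (hg : Continuous g)
    {a T : ℝ} (hbase : ∀ t ∈ Icc a T, f t ≤ g t)
    (hstep : ∀ t ≥ T, (∀ s ∈ Ico a t, f s ≤ g s) → f t < g t) :
    ∀ t ≥ a, f t ≤ g t := by
  by_contra! ⟨t₁, ht₁a, ht₁⟩
  set B := {t | a ≤ t ∧ g t < f t}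
  have hB : B.Nonempty := ⟨t₁, ht₁a, ht₁⟩
  have hbdd : BddBelow B := ⟨a, fun t ht => ht.1⟩
  have hBT : ∀ t ∈ B, T ≤ t := fun t ht =>
    le_of_not_gt fun h => (hbase t ⟨ht.1, h.le⟩).not_gt ht.2
  have hgood : ∀ s ∈ Ico a (sInf B), f s ≤ g s := fun s hs =>
    not_lt.1 fun h => hs.2.not_ge (csInf_le hbdd ⟨hs.1, h⟩)
  have hlt := hstep _ (le_csInf hB hBT) hgood
  obtain ⟨ε, hε, hball⟩ := Metric.isOpen_iff.1 (isOpen_lt hf hg) _ hlt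
  obtain ⟨t, htB, htε⟩ := exists_lt_of_csInf_lt hB (lt_add_of_pos_right (sInf B) hε)
  have hdist : dist t (sInf B) < ε := by
    rw [dist_eq, abs_lt]; constructor <;> linarith [csInf_le hbdd htB]
  exact (hball hdist).not_gt htB.2

namespace ProbabilityTheory

variable {Ω : Type*} [MeasurableSpace Ω] {μ : Measure Ω}

/-- Convexity of `exp` puts the mgf below its chord on `[0, T]`, and `1 + b s ≤ exp (b s)`. -/
theorem exists_mgf_le_exp_mul [IsProbabilityMeasure μ] {X : Ω → ℝ} {T : ℝ} (hT : 0 < T)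
    (hint : Integrable (fun ω => exp (T * X ω)) μ) :
    ∃ b, ∀ s ∈ Icc 0 T, mgf X μ s ≤ exp (b * s) := by
  refine ⟨(mgf X μ T - 1) / T, fun s hs => ?_⟩
  have hθ₀ : 0 ≤ s / T := div_nonneg hs.1 hT.le
  have hθ₁ : s / T ≤ 1 := (div_le_one hT).2 hs.2
  have hchord : ∀ ω, exp (s * X ω) ≤ (1 - s / T) + s / T * exp (T * X ω) := fun ω => by
    have := convexOn_exp.2 (mem_univ 0) (mem_univ (T * X ω)) (sub_nonneg.2 hθ₁) hθ₀ (by ring)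
    simp only [smul_eq_mul, mul_zero, zero_add, exp_zero, mul_one] at this
    rwa [← mul_assoc, div_mul_cancel₀ s hT.ne'] at this
  calc mgf X μ s ≤ ∫ ω, (1 - s / T) + s / T * exp (T * X ω) ∂μ :=
        integral_mono_of_nonneg (ae_of_all _ fun ω => (exp_pos _).le)
          ((integrable_const _).add (hint.const_mul _)) (ae_of_all _ hchord)
    _ = 1 + (mgf X μ T - 1) / T * s := by
        rw [integral_add (integrable_const _) (hint.const_mul _), integral_const_mul,
          integral_const, probReal_univ, one_smul]
        simp only [mgf]
        field_simp
        ring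
    _ ≤ exp ((mgf X μ T - 1) / T * s) := by linarith [add_one_le_exp ((mgf X μ T - 1) / T * s)]

/-- Chernoff's bound at `t = exp ((x - C) / a)`, for which `a t log t = t (x - C)`. -/
theorem exists_measure_le_neg_le_exp_neg_exp [IsFiniteMeasure μ] {X : Ω → ℝ} {a b T : ℝ}
    (ha : 0 < a) (hint : ∀ t, Integrable (fun ω => exp (t * X ω)) μ)
    (hmgf : ∀ t ≥ T, mgf X μ (-t) ≤ exp (a * (t * log t) + b * t)) :
    ∃ C > 0, ∃ x₀ > 0, ∀ x ≥ x₀, μ.real {ω | X ω ≤ -x} ≤ exp (-exp (a⁻¹ * x - C)) := by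
  set C := |b| + 1
  refine ⟨a⁻¹ * C, by positivity, C + a * |log T|, by positivity, fun x hx => ?_⟩
  set t := exp (a⁻¹ * x - a⁻¹ * C)
  have hlog : a * log t = x - C := by rw [log_exp]; field_simp
  have hTt : T ≤ t := by
    refine (le_exp_log T).trans (exp_le_exp.2 ?_)
    rw [← mul_sub, le_inv_mul_iff₀ ha]
    linarith [mul_le_mul_of_nonneg_left (le_abs_self (log T)) ha.le]
  have hexp : -t * x + (a * (t * log t) + b * t) ≤ -t := by
    have := exp_pos (a⁻¹ * x - a⁻¹ * C)
    nlinarith [le_abs_self b]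
  calc μ.real {ω | X ω ≤ -x} ≤ exp (-(-t) * -x) * mgf X μ (-t) :=
        measure_le_le_exp_mul_mgf (-x) (neg_nonpos.2 (exp_pos _).le) (hint _)
    _ ≤ exp (-t * x) * exp (a * (t * log t) + b * t) := by
        rw [neg_neg, mul_neg, ← neg_mul]; gcongr; exact hmgf t hTt
    _ ≤ exp (-t) := by rw [← exp_add]; exact exp_le_exp.2 hexp
    _ = exp (-exp (a⁻¹ * x - a⁻¹ * C)) := rfl

theorem mgf_mul_add_one_sub_mul_add [IsFiniteMeasure μ] {U X Y : Ω → ℝ} {g : ℝ → ℝ}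
    (hU : AEMeasurable U μ) (hX : AEMeasurable X μ) (hY : AEMeasurable Y μ) (hg : Measurable g)
    (hUXY : IndepFun U (fun ω => (X ω, Y ω)) μ) (hXY : IndepFun X Y μ) (t : ℝ)
    (hint : Integrable (fun ω => exp (t * (U ω * X ω + (1 - U ω) * Y ω + g (U ω)))) μ) :
    mgf (fun ω => U ω * X ω + (1 - U ω) * Y ω + g (U ω)) μ t
      = ∫ u, exp (t * g u) * (mgf X μ (t * u) * mgf Y μ (t * (1 - u))) ∂μ.map U := by
  have hW : AEMeasurable (fun ω => (U ω, X ω, Y ω)) μ := hU.prodMk (hX.prodMk hY)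
  have hmap : μ.map (fun ω => (U ω, X ω, Y ω)) = (μ.map U).prod ((μ.map X).prod (μ.map Y)) := by
    rw [← (indepFun_iff_map_prod_eq_prod_map_map hX hY).1 hXY]
    exact (indepFun_iff_map_prod_eq_prod_map_map hU (hX.prodMk hY)).1 hUXY
  set F : ℝ × ℝ × ℝ → ℝ := fun p => exp (t * (p.1 * p.2.1 + (1 - p.1) * p.2.2 + g p.1))
  have hF : Measurable F := by fun_prop
  have hFint : Integrable F ((μ.map U).prod ((μ.map X).prod (μ.map Y))) := by
    rwa [← hmap, integrable_map_measure hF.aestronglyMeasurable hW]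
  have hmgf_map : ∀ {V : Ω → ℝ}, AEMeasurable V μ →
      ∀ s, ∫ y, exp (s * y) ∂μ.map V = mgf V μ s := fun hV s =>
    integral_map hV (by fun_prop)
  have hsplit : ∀ u (q : ℝ × ℝ),
      F (u, q) = exp (t * g u) * (exp (t * u * q.1) * exp (t * (1 - u) * q.2)) := fun u q => by
    simp only [F, ← exp_add]; ring_nf
  calc mgf (fun ω => U ω * X ω + (1 - U ω) * Y ω + g (U ω)) μ t
      = ∫ p, F p ∂μ.map (fun ω => (U ω, X ω, Y ω)) := (integral_map hW hF.aestronglyMeasurable).symm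
    _ = ∫ u, ∫ q, F (u, q) ∂(μ.map X).prod (μ.map Y) ∂μ.map U := by rw [hmap, integral_prod F hFint]
    _ = _ := by
        congr 1 with u
        simp only [hsplit, integral_const_mul]
        rw [integral_prod_mul (fun x => exp (t * u * x)) (fun y => exp (t * (1 - u) * y)),
          hmgf_map hX, hmgf_map hY]

end ProbabilityTheory

namespace Quicksort

/-- The reciprocal of the rate `γ` of the left tail. -/
noncomputable def tailExponent : ℝ := 2 - 1 / log 2

/-- The toll function `g u = 2 u log u + 2 (1 - u) log (1 - u) + 1` of the fixed-point equation. -/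
noncomputable def toll (u : ℝ) : ℝ := 1 - 2 * binEntropy u

noncomputable def entropyGap (u : ℝ) : ℝ := 1 - binEntropy u / log 2

noncomputable def majorant (b t : ℝ) : ℝ := exp (tailExponent * max (t * log t) 0 + b * t)

lemma tailExponent_pos : 0 < tailExponent := by
  have : 1 / log 2 < 2 := by
    rw [div_lt_iff₀ (log_pos one_lt_two)]; linarith [log_two_gt_d9]
  unfold tailExponent; linarith

lemma tailExponent_le_two : tailExponent ≤ 2 := by
  unfold tailExponent; linarith [one_div_pos.2 (log_pos one_lt_two)]

lemma entropyGap_nonneg (u : ℝ) : 0 ≤ entropyGap u := by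
  rw [entropyGap, sub_nonneg, div_le_one (log_pos one_lt_two)]
  exact binEntropy_le_log_two

lemma entropyGap_pos {u : ℝ} (hu : u ≠ 2⁻¹) : 0 < entropyGap u := by
  rw [entropyGap, sub_pos, div_lt_one (log_pos one_lt_two)]
  exact binEntropy_lt_log_two.2 hu

@[fun_prop]
lemma continuous_entropyGap : Continuous entropyGap := by
  unfold entropyGap; fun_prop

/-- The loss `entropyGap` vanishes only at `u = 1/2`. -/
lemma tendsto_integral_exp_neg_mul_entropyGap :
    Tendsto (fun t => ∫ u in Icc 0 1, exp (-(t * entropyGap u))) atTop (𝓝 0) := by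
  have hlim : ∀ᵐ u ∂volume.restrict (Icc (0 : ℝ) 1),
      Tendsto (fun t => exp (-(t * entropyGap u))) atTop (𝓝 0) := by
    refine ae_restrict_of_ae (((countable_singleton (2⁻¹ : ℝ)).ae_notMem _).mono fun u hu => ?_)
    exact tendsto_exp_atBot.comp <| tendsto_neg_atTop_atBot.comp <|
      tendsto_id.atTop_mul_const (entropyGap_pos hu)
  simpa using tendsto_integral_filter_of_dominated_convergence (fun _ => (1 : ℝ))
    (Eventually.of_forall fun t => by fun_prop)
    ((eventually_ge_atTop 0).mono fun t ht => Eventually.of_forall fun u => by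
      rw [norm_of_nonneg (exp_pos _).le, exp_le_one_iff, neg_nonpos]
      exact mul_nonneg ht (entropyGap_nonneg u))
    (integrableOn_const measure_Icc_lt_top.ne) hlim

lemma max_mul_log_le {s : ℝ} (hs : 0 ≤ s) : max (s * log s) 0 ≤ s * log s + 1 := by
  have := negMulLog_le_one_sub_self hs
  rw [negMulLog] at this
  exact max_le (by linarith) (by linarith)

lemma mul_log_mul_add_mul_log_mul {t u : ℝ} (ht : 0 < t) (hu : u ∈ Ioo 0 1) :
    t * u * log (t * u) + t * (1 - u) * log (t * (1 - u)) = t * log t - t * binEntropy u := by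
  have hu' : 0 < 1 - u := sub_pos.2 hu.2
  rw [log_mul ht.ne' hu.1.ne', log_mul ht.ne' hu'.ne', binEntropy, log_inv, log_inv]
  ring

lemma majorant_of_one_le (b : ℝ) {t : ℝ} (ht : 1 ≤ t) :
    majorant b t = exp (tailExponent * (t * log t) + b * t) := by
  rw [majorant, max_eq_left (mul_nonneg (by linarith) (log_nonneg ht))]

lemma exp_mul_le_majorant (b t : ℝ) : exp (b * t) ≤ majorant b t :=
  exp_le_exp.2 (le_add_of_nonneg_left (mul_nonneg tailExponent_pos.le (le_max_right _ _)))

lemma continuous_majorant (b : ℝ) : Continuous (majorant b) := by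
  unfold majorant; have := continuous_mul_log; fun_prop

/-- Since `2 - tailExponent = 1 / log 2`, the recursion splits the exponent of `majorant b t`
exactly up to the loss `t * entropyGap u`; the positive parts of `s log s` cost at most
`2 * tailExponent ≤ 4`. -/
lemma exp_neg_mul_toll_mul_majorant_le (b : ℝ) {t u : ℝ} (ht : 1 ≤ t) (hu : u ∈ Ioo 0 1) :
    exp (-(t * toll u)) * (majorant b (t * u) * majorant b (t * (1 - u)))
      ≤ exp 4 * majorant b t * exp (-(t * entropyGap u)) := by
  have ht0 : 0 < t := by linarith
  have h₁ := max_mul_log_le (mul_pos ht0 hu.1).le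
  have h₂ := max_mul_log_le (mul_pos ht0 (sub_pos.2 hu.2)).le
  have hsplit := mul_log_mul_add_mul_log_mul ht0 hu
  have ha := tailExponent_pos
  have hgap : tailExponent * binEntropy u - 2 * binEntropy u = - (binEntropy u / log 2) := by
    rw [tailExponent]; ring
  rw [majorant_of_one_le b ht]
  simp only [majorant, ← exp_add]
  refine exp_le_exp.2 ?_
  rw [toll, entropyGap]
  linarith [mul_le_mul_of_nonneg_left h₁ ha.le, mul_le_mul_of_nonneg_left h₂ ha.le,
    tailExponent_le_two, congrArg (tailExponent * ·) hsplit, congrArg (t * ·) hgap]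

lemma lt_majorant_of_forall_Ico {L : ℝ → ℝ} {b t : ℝ} (hL₀ : ∀ s, 0 ≤ L s)
    (hL : L t = ∫ u in Icc 0 1, exp (-(t * toll u)) * (L (t * u) * L (t * (1 - u))))
    (ht : 1 ≤ t) (hgap : ∫ u in Icc 0 1, exp (-(t * entropyGap u)) ≤ exp (-4) / 2)
    (hind : ∀ s ∈ Ico 0 t, L s ≤ majorant b s) : L t < majorant b t := by
  have ht0 : 0 < t := by linarith
  have hpt : ∀ u ∈ Ioo (0 : ℝ) 1, exp (-(t * toll u)) * (L (t * u) * L (t * (1 - u)))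
      ≤ exp 4 * majorant b t * exp (-(t * entropyGap u)) := fun u hu => by
    refine le_trans ?_ (exp_neg_mul_toll_mul_majorant_le b ht hu)
    have h₁ := hind _ ⟨(mul_pos ht0 hu.1).le, mul_lt_of_lt_one_right ht0 hu.2⟩
    have h₂ := hind _ ⟨(mul_pos ht0 (sub_pos.2 hu.2)).le,
      mul_lt_of_lt_one_right ht0 (by linarith [hu.1])⟩
    exact mul_le_mul_of_nonneg_left (mul_le_mul h₁ h₂ (hL₀ _) ((hL₀ _).trans h₁)) (exp_pos _).le
  have hG : 0 < majorant b t := exp_pos _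
  calc L t ≤ ∫ u in Ioo 0 1, exp 4 * majorant b t * exp (-(t * entropyGap u)) := by
        rw [hL, integral_Icc_eq_integral_Ioo]
        refine integral_mono_of_nonneg
          (ae_of_all _ fun u => mul_nonneg (exp_pos _).le (mul_nonneg (hL₀ _) (hL₀ _)))
          ((Continuous.integrableOn_Icc (by fun_prop)).mono_set Ioo_subset_Icc_self)
          (ae_restrict_of_forall_mem measurableSet_Ioo hpt)
    _ = exp 4 * majorant b t * ∫ u in Icc 0 1, exp (-(t * entropyGap u)) := by
        rw [integral_const_mul, integral_Icc_eq_integral_Ioo]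
    _ ≤ exp 4 * majorant b t * (exp (-4) / 2) := by gcongr
    _ = majorant b t * exp (4 + -4) / 2 := by rw [exp_add]; ring
    _ = majorant b t / 2 := by norm_num
    _ < majorant b t := half_lt_self hG

theorem mgf_eq_integral_toll {Ω : Type*} [MeasurableSpace Ω] {μ : Measure Ω}
    [IsFiniteMeasure μ] {Z Z' Z'' U : Ω → ℝ}
    (hZ' : IdentDistrib Z' Z μ μ) (hZ'' : IdentDistrib Z'' Z μ μ)
    (hU : μ.map U = volume.restrict (Icc (0 : ℝ) 1)) (hindep : iIndepFun ![U, Z', Z''] μ)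
    (hrec : IdentDistrib Z (fun ω => U ω * Z' ω + (1 - U ω) * Z'' ω + toll (U ω)) μ μ)
    (hmgf : ∀ t, Integrable (fun ω => exp (t * Z ω)) μ) (t : ℝ) :
    mgf Z μ t = ∫ u in Icc 0 1, exp (t * toll u) * (mgf Z μ (t * u) * mgf Z μ (t * (1 - u))) := by
  have hUm : AEMeasurable U μ := AEMeasurable.of_map_ne_zero (by simp [hU])
  have hZ'm := hZ'.aemeasurable_fst
  have hZ''m := hZ''.aemeasurable_fst
  have hmeas : ∀ i, AEMeasurable (![U, Z', Z''] i) μ := by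
    intro i; fin_cases i
    exacts [hUm, hZ'm, hZ''m]
  have htoll : Measurable toll := by unfold toll; fun_prop
  have hint := (hrec.comp (measurable_const_mul t).exp).integrable_iff.1 (hmgf t)
  have hUZZ : IndepFun U (fun ω => (Z' ω, Z'' ω)) μ := by
    simpa using (hindep.indepFun_prodMk₀ hmeas 1 2 0 (by decide) (by decide)).symm
  have hZZ : IndepFun Z' Z'' μ := by
    simpa using hindep.indepFun (show (1 : Fin 3) ≠ 2 by decide)
  rw [congrFun (mgf_congr_identDistrib hrec) t,
    mgf_mul_add_one_sub_mul_add hUm hZ'm hZ''m htoll hUZZ hZZ t hint,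
    hU, mgf_congr_identDistrib hZ', mgf_congr_identDistrib hZ'']

end Quicksort

open Quicksort

theorem quicksort_left_tail_upper_bound_general
    {Ω : Type*} [MeasureSpace Ω] [IsProbabilityMeasure (ℙ : Measure Ω)]
    (Z Z' Z'' U : Ω → ℝ) (g : ℝ → ℝ)
    (hg : ∀ u : ℝ, g u = 2 * u * Real.log u + 2 * (1 - u) * Real.log (1 - u) + 1)
    (hZ' : IdentDistrib Z' Z ℙ ℙ) (hZ'' : IdentDistrib Z'' Z ℙ ℙ)
    (hU : Measure.map U ℙ = volume.restrict (Set.Icc (0 : ℝ) 1))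
    (hindep : iIndepFun ![U, Z', Z''] ℙ)
    (hrec : IdentDistrib Z (fun ω => U ω * Z' ω + (1 - U ω) * Z'' ω + g (U ω)) ℙ ℙ)
    (hmgf : ∀ t : ℝ, Integrable (fun ω => Real.exp (t * Z ω)) ℙ) :
    ∃ C > (0 : ℝ), ∃ x₀ > (0 : ℝ), ∀ x ≥ x₀,
      (ℙ {ω | Z ω ≤ -x}).toReal
        ≤ Real.exp (-Real.exp ((2 - 1 / Real.log 2)⁻¹ * x - C)) := by
  have hg_eq : g = toll := funext fun u => by rw [hg, toll, binEntropy, log_inv, log_inv]; ring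
  subst hg_eq
  have hfix : ∀ t, mgf Z ℙ (-t) = ∫ u in Icc 0 1,
      exp (-(t * toll u)) * (mgf Z ℙ (-(t * u)) * mgf Z ℙ (-(t * (1 - u)))) := fun t => by
    simpa only [neg_mul] using mgf_eq_integral_toll hZ' hZ'' hU hindep hrec hmgf (-t)
  obtain ⟨T, hT⟩ := eventually_atTop.1 <| tendsto_integral_exp_neg_mul_entropyGap.eventually
    (ge_mem_nhds (by positivity : (0 : ℝ) < exp (-4) / 2))
  obtain ⟨b, hb⟩ := exists_mgf_le_exp_mul (X := -Z) (T := max T 1) (by positivity)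
    (by simpa using hmgf (-max T 1))
  have hmaj : ∀ t ≥ 0, mgf Z ℙ (-t) ≤ majorant b t :=
    le_of_continuous_induction ((continuous_mgf hmgf).comp continuous_neg) (continuous_majorant b)
      (fun t ht => mgf_neg.symm.trans_le ((hb t ht).trans (exp_mul_le_majorant b t)))
      (fun t ht => lt_majorant_of_forall_Ico (fun _ => mgf_nonneg) (hfix t)
        (le_of_max_le_right ht) (hT t (le_of_max_le_left ht)))
  exact exists_measure_le_neg_le_exp_neg_exp tailExponent_pos hmgf fun t ht =>
    majorant_of_one_le b ht ▸ hmaj t (by linarith)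

/-- Upper bound of Theorem 1(i): with `γ := (2 - 1/ln 2)⁻¹`, there are
`C > 0` and `x₀ > 0` such that for all `x ≥ x₀`, `P(Z ≤ -x) ≤ exp(-exp(γ·x - C))`. -/
theorem quicksort_left_tail_upper_bound
    {Ω : Type*} [MeasureSpace Ω] [IsProbabilityMeasure (ℙ : Measure Ω)]
    (Z Z' Z'' U : Ω → ℝ) (g : ℝ → ℝ)
    (hg : ∀ u : ℝ, g u = 2 * u * Real.log u + 2 * (1 - u) * Real.log (1 - u) + 1)
    (hZm : Measurable Z) (hZ'm : Measurable Z') (hZ''m : Measurable Z'')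
    (hUm : Measurable U)
    (hZ' : IdentDistrib Z' Z ℙ ℙ) (hZ'' : IdentDistrib Z'' Z ℙ ℙ)
    (hU : Measure.map U ℙ = volume.restrict (Set.Icc (0 : ℝ) 1))
    (hindep : iIndepFun ![U, Z', Z''] ℙ)
    (hrec : IdentDistrib Z (fun ω => U ω * Z' ω + (1 - U ω) * Z'' ω + g (U ω)) ℙ ℙ)
    (hmean : ∫ ω, Z ω ∂ℙ = 0)
    (hmgf : ∀ t : ℝ, Integrable (fun ω => Real.exp (t * Z ω)) ℙ) :
    ∃ C > (0 : ℝ), ∃ x₀ > (0 : ℝ), ∀ x ≥ x₀,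
      (ℙ {ω | Z ω ≤ -x}).toReal
        ≤ Real.exp (-Real.exp ((2 - 1 / Real.log 2)⁻¹ * x - C)) :=
  quicksort_left_tail_upper_bound_general Z Z' Z'' U g hg hZ' hZ'' hU hindep hrec hmgf
end

section
/- There exist a constant C > 0 and a threshold x₀ > 0 such that for all x ≥ x₀, P(Z ≥ x) ≥ exp(−x·ln x − x·ln(ln x) − C·x). (Lower bound of Theorem 1(ii): right tail of the limiting Quicksort distribution.) -/
open MeasureTheory ProbabilityTheory Real Set

/-!
If `U ∈ [1 - ε, 1]` (probability `ε`), `Z' ≥ a ≥ 0` and `Z'' ≥ 0`, the fixed-point equation gives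
`Z ≥ (1 - ε) a + tollBound ε`, where `tollBound ε = 1 - 4ε + 2ε log ε` bounds the toll `g` from
below on `[1 - ε, 1]`. By independence,
`P(Z ≥ (1 - ε) a + tollBound ε) ≥ ε · P(Z ≥ a) · P(Z ≥ 0)`, and `P(Z ≥ 0) > 0` since `E Z = 0`.
Iterating `n` times from `a = 0` gives `P(Z ≥ a_n) ≥ (ε P(Z ≥ 0))^(n+1)` with
`a_n ≥ tollBound ε · n (1 - nε/2)`. For `ε = 1/(x log x)` and `n = ⌈x (1 + 3 / log x)⌉` we get
`a_n ≥ x`, while `(ε P(Z ≥ 0))^(n+1) ≥ exp(-x log x - x log log x - C x)`.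
-/

namespace QuicksortTail

lemma neg_two_mul_le_log_one_sub {ε : ℝ} (h0 : 0 ≤ ε) (h : ε ≤ 1 / 2) :
    -(2 * ε) ≤ log (1 - ε) := by
  have hpos : 0 < 1 - ε := by linarith
  have hinv : (1 - ε)⁻¹ ≤ 1 + 2 * ε := by
    rw [inv_le_iff_one_le_mul₀ hpos]
    nlinarith
  linarith [one_sub_inv_le_log_of_pos hpos]

noncomputable def tollBound (ε : ℝ) : ℝ := 1 - 4 * ε + 2 * ε * log ε

lemma tollBound_le {ε u : ℝ} (hε0 : 0 ≤ ε) (hε : ε ≤ exp (-1)) (hu : u ∈ Icc (1 - ε) 1) :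
    tollBound ε ≤ 2 * u * log u + 2 * (1 - u) * log (1 - u) + 1 := by
  obtain ⟨hu1, hu2⟩ := hu
  have hlog_u : -(2 * ε) ≤ log u :=
    (neg_two_mul_le_log_one_sub hε0 (hε.trans exp_neg_one_lt_half.le)).trans
      (log_le_log (by linarith [exp_neg_one_lt_half]) hu1)
  have hu_log_u : log u ≤ u * log u := by
    nlinarith [log_nonpos (by linarith [exp_neg_one_lt_half]) hu2]
  have hent : ε * log ε ≤ (1 - u) * log (1 - u) :=
    mul_log_strictAntiOn.antitoneOn ⟨by linarith, by linarith⟩ ⟨hε0, hε⟩ (by linarith)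
  unfold tollBound
  linarith

def tailSeq (ε Δ : ℝ) : ℕ → ℝ
  | 0 => 0
  | k + 1 => (1 - ε) * tailSeq ε Δ k + Δ

lemma tailSeq_nonneg {ε Δ : ℝ} (hε : ε ≤ 1) (hΔ : 0 ≤ Δ) (k : ℕ) : 0 ≤ tailSeq ε Δ k := by
  induction k with
  | zero => rfl
  | succ k ih => exact add_nonneg (mul_nonneg (by linarith) ih) hΔ

lemma mul_mul_one_sub_le_tailSeq {ε Δ : ℝ} (hε0 : 0 ≤ ε) (hε1 : ε ≤ 1) (hΔ : 0 ≤ Δ) (k : ℕ) :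
    Δ * k * (1 - k * ε / 2) ≤ tailSeq ε Δ k := by
  induction k with
  | zero => simp [tailSeq]
  | succ k ih =>
    have hk : (0 : ℝ) ≤ k := k.cast_nonneg
    have step : (1 - ε) * (Δ * k * (1 - k * ε / 2)) ≤ (1 - ε) * tailSeq ε Δ k :=
      mul_le_mul_of_nonneg_left ih (by linarith)
    rw [tailSeq]
    push_cast
    -- the defect is `Δ ε (1 + k² ε) / 2 ≥ 0`
    nlinarith [mul_nonneg (mul_nonneg hΔ hε0) (mul_nonneg (mul_nonneg hk hk) hε0)]

lemma four_add_four_mul_log_le {x : ℝ} (hx0 : 0 < x) (hL : 10 ≤ log x) : 4 + 4 * log x ≤ x := by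
  have := quadratic_le_exp_of_nonneg (by linarith : 0 ≤ log x)
  rw [exp_log hx0] at this
  nlinarith

lemma one_sub_inv_le_tollBound {x : ℝ} (hx0 : 0 < x) (hL : 10 ≤ log x) :
    1 - (log x)⁻¹ ≤ tollBound (x * log x)⁻¹ := by
  have hx := four_add_four_mul_log_le hx0 hL
  set L := log x
  have hL0 : 0 < L := by linarith
  have hlogL : log L ≤ L := log_le_self hL0.le
  have hlogL0 : 0 ≤ log L := log_nonneg (by linarith)
  have hlog : log (x * L)⁻¹ = -(L + log L) := by
    rw [log_inv, log_mul hx0.ne' hL0.ne']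
  rw [tollBound, hlog]
  have key : (4 + 2 * (L + log L)) * (x * L)⁻¹ ≤ L⁻¹ := by
    rw [mul_inv, ← mul_assoc, ← div_eq_mul_inv _ x]
    exact mul_le_of_le_one_left (by positivity) ((div_le_one hx0).mpr (by linarith))
  linarith

lemma le_tailSeq {x Δ : ℝ} {n : ℕ} (hx0 : 0 < x) (hL : 10 ≤ log x)
    (hΔ : 1 - (log x)⁻¹ ≤ Δ) (hn₁ : x * (1 + 3 * (log x)⁻¹) ≤ n)
    (hn₂ : n ≤ x * (1 + 3 * (log x)⁻¹) + 1) : x ≤ tailSeq (x * log x)⁻¹ Δ n := by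
  have hx := four_add_four_mul_log_le hx0 hL
  set u := (log x)⁻¹ with hu_def
  have hu0 : 0 < u := by positivity
  have hu : u ≤ 1 / 10 := by rw [hu_def]; exact inv_le_of_inv_le₀ (by norm_num) (by linarith)
  have hε : (x * log x)⁻¹ = u / x := by rw [mul_inv, hu_def]; ring
  have hε1 : u / x ≤ 1 := (div_le_one hx0).mpr (by linarith)
  have hn2x : (n : ℝ) ≤ 2 * x := by nlinarith
  have hnε : n * (u / x) ≤ 2 * u := by
    rw [mul_div_assoc', div_le_iff₀ hx0]; nlinarith
  rw [hε]
  calc x ≤ (1 - u) ^ 2 * (x * (1 + 3 * u)) := by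
        nlinarith [mul_nonneg (mul_nonneg hx0.le hu0.le) (by linarith : (0 : ℝ) ≤ 1 - 5 * u),
          mul_nonneg (mul_nonneg hx0.le hu0.le) (mul_nonneg hu0.le hu0.le)]
    _ ≤ (1 - u) * n * (1 - u) := by nlinarith
    _ ≤ Δ * n * (1 - n * (u / x) / 2) :=
        mul_le_mul (mul_le_mul_of_nonneg_right hΔ n.cast_nonneg) (by linarith) (by linarith)
          (mul_nonneg (by linarith) n.cast_nonneg)
    _ ≤ tailSeq (u / x) Δ n :=
        mul_mul_one_sub_le_tailSeq (by positivity) hε1 (by linarith) n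

lemma exp_neg_mul_log_le_pow_succ {x K : ℝ} {n : ℕ} (hx0 : 0 < x) (hL : 10 ≤ log x)
    (hK : 0 ≤ K) (hn : n ≤ x * (1 + 3 * (log x)⁻¹) + 1) :
    exp (-x * log x - x * log (log x) - (10 + 4 * K) * x) ≤
      ((x * log x)⁻¹ * exp (-K)) ^ (n + 1) := by
  have hx := four_add_four_mul_log_le hx0 hL
  have hL0 : 0 < log x := by linarith
  have hpow : ((x * log x)⁻¹ * exp (-K)) ^ (n + 1) =
      exp (-((n + 1) * (log x + log (log x) + K))) := by
    rw [← exp_log (by positivity : 0 < (x * log x)⁻¹), ← exp_add, ← exp_nat_mul, log_inv,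
      log_mul hx0.ne' hL0.ne']
    push_cast; ring_nf
  rw [hpow, exp_le_exp]
  set L := log x
  have hlogL : log L ≤ L := log_le_self hL0.le
  have hlogL0 : 0 ≤ log L := log_nonneg (by linarith)
  set m := 3 * x * L⁻¹ with hm
  have hmL : m * L = 3 * x := by rw [hm]; field_simp
  have hmx : m ≤ x := by rw [hm, mul_inv_le_iff₀ hL0]; nlinarith
  have hn' : (n : ℝ) + 1 ≤ x + m + 2 := by linarith
  nlinarith [mul_le_mul_of_nonneg_right hn' (by positivity : 0 ≤ L + log L + K),
    mul_le_mul_of_nonneg_left hlogL (by positivity : 0 ≤ m), mul_le_mul_of_nonneg_right hmx hK]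

section FixedPoint

variable {Ω : Type*} [MeasurableSpace Ω] {μ : Measure Ω} {Z : Ω → ℝ}

lemma ofReal_mul_measure_Ici_mul_le {Z' Z'' U : Ω → ℝ} {g : ℝ → ℝ} (hUm : Measurable U)
    (hU : μ.map U = volume.restrict (Icc 0 1)) (hindep : iIndepFun ![U, Z', Z''] μ)
    (hZ' : IdentDistrib Z' Z μ μ) (hZ'' : IdentDistrib Z'' Z μ μ)
    (hrec : IdentDistrib Z (fun ω => U ω * Z' ω + (1 - U ω) * Z'' ω + g (U ω)) μ μ)
    {ε a Δ : ℝ} (hε1 : ε ≤ 1) (ha : 0 ≤ a) (hg : ∀ u ∈ Icc (1 - ε) 1, Δ ≤ g u) :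
    ENNReal.ofReal ε * μ (Z ⁻¹' Ici a) * μ (Z ⁻¹' Ici 0) ≤
      μ (Z ⁻¹' Ici ((1 - ε) * a + Δ)) := by
  have hU_mass : μ (U ⁻¹' Icc (1 - ε) 1) = ENNReal.ofReal ε := by
    rw [← Measure.map_apply hUm measurableSet_Icc, hU, Measure.restrict_apply measurableSet_Icc,
      inter_eq_left.mpr (Icc_subset_Icc (by linarith) le_rfl), Real.volume_Icc]
    ring_nf
  have hjoint : μ (U ⁻¹' Icc (1 - ε) 1 ∩ Z' ⁻¹' Ici a ∩ Z'' ⁻¹' Ici 0) =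
      ENNReal.ofReal ε * μ (Z ⁻¹' Ici a) * μ (Z ⁻¹' Ici 0) := by
    have := hindep.measure_inter_preimage_eq_mul (S := Finset.univ)
      (sets := ![Icc (1 - ε) 1, Ici a, Ici 0]) (fun i _ => by fin_cases i <;> simp)
    have hinter : (⋂ i, ![U, Z', Z''] i ⁻¹' ![Icc (1 - ε) 1, Ici a, Ici 0] i) =
        U ⁻¹' Icc (1 - ε) 1 ∩ Z' ⁻¹' Ici a ∩ Z'' ⁻¹' Ici 0 := by
      ext ω
      simp [Fin.forall_fin_succ, and_assoc]
    simp only [Fin.prod_univ_three, Finset.mem_univ, iInter_true, hinter] at this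
    rw [this]
    exact congr_arg₂ (· * ·) (congr_arg₂ (· * ·) hU_mass (hZ'.measure_mem_eq measurableSet_Ici))
      (hZ''.measure_mem_eq measurableSet_Ici)
  calc ENNReal.ofReal ε * μ (Z ⁻¹' Ici a) * μ (Z ⁻¹' Ici 0)
      = μ (U ⁻¹' Icc (1 - ε) 1 ∩ Z' ⁻¹' Ici a ∩ Z'' ⁻¹' Ici 0) := hjoint.symm
    _ ≤ μ ((fun ω => U ω * Z' ω + (1 - U ω) * Z'' ω + g (U ω)) ⁻¹' Ici ((1 - ε) * a + Δ)) := by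
        refine measure_mono fun ω ⟨⟨⟨hU1, hU2⟩, hZ'ω⟩, hZ''ω⟩ => ?_
        have hgU := hg (U ω) ⟨hU1, hU2⟩
        simp only [mem_preimage, mem_Ici] at hZ'ω hZ''ω ⊢
        nlinarith [mul_nonneg (sub_nonneg.mpr hU2) hZ''ω]
    _ = μ (Z ⁻¹' Ici ((1 - ε) * a + Δ)) := (hrec.measure_mem_eq measurableSet_Ici).symm

lemma pow_mul_le_measure_Ici_tailSeq {q : ENNReal} {ε Δ : ℝ} (hε : ε ≤ 1) (hΔ : 0 ≤ Δ)
    (hstep : ∀ a, 0 ≤ a → q * μ (Z ⁻¹' Ici a) ≤ μ (Z ⁻¹' Ici ((1 - ε) * a + Δ))) (k : ℕ) :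
    q ^ k * μ (Z ⁻¹' Ici 0) ≤ μ (Z ⁻¹' Ici (tailSeq ε Δ k)) := by
  induction k with
  | zero => simp [tailSeq]
  | succ k ih =>
    calc q ^ (k + 1) * μ (Z ⁻¹' Ici 0) = q * (q ^ k * μ (Z ⁻¹' Ici 0)) := by ring
      _ ≤ q * μ (Z ⁻¹' Ici (tailSeq ε Δ k)) := by gcongr
      _ ≤ μ (Z ⁻¹' Ici (tailSeq ε Δ (k + 1))) := hstep _ (tailSeq_nonneg hε hΔ k)

lemma measure_Ici_zero_pos [IsProbabilityMeasure μ] (hZ : Integrable Z μ)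
    (hmean : ∫ ω, Z ω ∂μ = 0) : 0 < μ (Z ⁻¹' Ici 0) := by
  have := measure_integral_le_pos hZ
  rwa [hmean] at this

lemma exists_tail_lower_bound [IsProbabilityMeasure μ] (hpos : 0 < μ (Z ⁻¹' Ici 0))
    (hstep : ∀ ε, 0 < ε → ε ≤ exp (-1) → ∀ a, 0 ≤ a → ENNReal.ofReal ε * μ (Z ⁻¹' Ici a) *
      μ (Z ⁻¹' Ici 0) ≤ μ (Z ⁻¹' Ici ((1 - ε) * a + tollBound ε))) :
    ∃ C > (0 : ℝ), ∃ x₀ > (0 : ℝ), ∀ x ≥ x₀,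
      exp (-x * log x - x * log (log x) - C * x) ≤ (μ {ω | x ≤ Z ω}).toReal := by
  set P := μ (Z ⁻¹' Ici 0)
  have hp0 : 0 < P.toReal := ENNReal.toReal_pos hpos.ne' (measure_ne_top _ _)
  have hp1 : P.toReal ≤ 1 := measureReal_le_one
  set K := -log P.toReal
  have hK : 0 ≤ K := neg_nonneg.mpr (log_nonpos hp0.le hp1)
  have hP : P.toReal = exp (-K) := by rw [neg_neg, exp_log hp0]
  refine ⟨10 + 4 * K, by positivity, exp 10, exp_pos 10, fun x hx => ?_⟩
  have hx0 : 0 < x := (exp_pos 10).trans_le hx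
  have hL : 10 ≤ log x := (le_log_iff_exp_le hx0).mpr hx
  have h44 := four_add_four_mul_log_le hx0 hL
  set ε := (x * log x)⁻¹
  have hε0 : 0 < ε := by positivity
  have hεe : ε ≤ exp (-1) := by
    refine le_trans ?_ exp_neg_one_gt_d9.le
    exact inv_le_of_inv_le₀ (by norm_num) (by nlinarith)
  have hε1 : ε ≤ 1 := hεe.trans (exp_neg_one_lt_half.le.trans (by norm_num))
  have hΔ := one_sub_inv_le_tollBound hx0 hL
  have hΔ0 : 0 ≤ tollBound ε :=
    le_trans (sub_nonneg.mpr (inv_le_one_of_one_le₀ (by linarith))) hΔ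
  set n := ⌈x * (1 + 3 * (log x)⁻¹)⌉₊
  have hn₂ : (n : ℝ) ≤ x * (1 + 3 * (log x)⁻¹) + 1 := (Nat.ceil_lt_add_one (by positivity)).le
  have hiter := pow_mul_le_measure_Ici_tailSeq (q := ENNReal.ofReal ε * P) hε1 hΔ0
    (fun a ha => by rw [mul_right_comm]; exact hstep ε hε0 hεe a ha) n
  have hseq : x ≤ tailSeq ε (tollBound ε) n := le_tailSeq hx0 hL hΔ (Nat.le_ceil _) hn₂
  calc exp (-x * log x - x * log (log x) - (10 + 4 * K) * x)
      ≤ (ε * P.toReal) ^ (n + 1) := hP ▸ exp_neg_mul_log_le_pow_succ hx0 hL hK hn₂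
    _ ≤ (ε * P.toReal) ^ n * P.toReal := by
        rw [pow_succ]
        gcongr
        exact mul_le_of_le_one_left hp0.le hε1
    _ = ((ENNReal.ofReal ε * P) ^ n * P).toReal := by
        rw [ENNReal.toReal_mul, ENNReal.toReal_pow, ENNReal.toReal_mul,
          ENNReal.toReal_ofReal hε0.le]
    _ ≤ (μ (Z ⁻¹' Ici (tailSeq ε (tollBound ε) n))).toReal :=
        ENNReal.toReal_mono (measure_ne_top _ _) hiter
    _ ≤ (μ {ω | x ≤ Z ω}).toReal :=
        ENNReal.toReal_mono (measure_ne_top _ _) (measure_mono fun ω hω => hseq.trans hω)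

end FixedPoint

end QuicksortTail

theorem quicksort_right_tail_lower_bound_general
    {Ω : Type*} [MeasureSpace Ω] [IsProbabilityMeasure (ℙ : Measure Ω)]
    (Z Z' Z'' U : Ω → ℝ) (g : ℝ → ℝ)
    (hg : ∀ u : ℝ, g u = 2 * u * Real.log u + 2 * (1 - u) * Real.log (1 - u) + 1)
    (hUm : Measurable U)
    (hZ' : IdentDistrib Z' Z ℙ ℙ) (hZ'' : IdentDistrib Z'' Z ℙ ℙ)
    (hU : Measure.map U ℙ = volume.restrict (Set.Icc (0 : ℝ) 1))
    (hindep : iIndepFun ![U, Z', Z''] ℙ)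
    (hrec : IdentDistrib Z (fun ω => U ω * Z' ω + (1 - U ω) * Z'' ω + g (U ω)) ℙ ℙ)
    (hmean : ∫ ω, Z ω ∂ℙ = 0)
    (hmgf : ∀ t : ℝ, Integrable (fun ω => Real.exp (t * Z ω)) ℙ) :
    ∃ C > (0 : ℝ), ∃ x₀ > (0 : ℝ), ∀ x ≥ x₀,
      Real.exp (-x * Real.log x - x * Real.log (Real.log x) - C * x)
        ≤ (ℙ {ω | x ≤ Z ω}).toReal := by
  have hZ : Integrable Z ℙ := by
    simpa using integrable_pow_of_integrable_exp_mul one_ne_zero (hmgf 1) (hmgf (-1)) 1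
  refine QuicksortTail.exists_tail_lower_bound (QuicksortTail.measure_Ici_zero_pos hZ hmean)
    fun ε hε0 hεe a ha => ?_
  have hε1 : ε ≤ 1 := hεe.trans (exp_neg_one_lt_half.le.trans (by norm_num))
  refine QuicksortTail.ofReal_mul_measure_Ici_mul_le hUm hU hindep hZ' hZ'' hrec hε1 ha
    fun u hu => ?_
  rw [hg]
  exact QuicksortTail.tollBound_le hε0.le hεe hu

/-- Lower bound of Theorem 1(ii): there are `C > 0` and `x₀ > 0` such
that for all `x ≥ x₀`, `P(Z ≥ x) ≥ exp(-x·ln x - x·ln ln x - C·x)`. -/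
theorem quicksort_right_tail_lower_bound
    {Ω : Type*} [MeasureSpace Ω] [IsProbabilityMeasure (ℙ : Measure Ω)]
    (Z Z' Z'' U : Ω → ℝ) (g : ℝ → ℝ)
    (hg : ∀ u : ℝ, g u = 2 * u * Real.log u + 2 * (1 - u) * Real.log (1 - u) + 1)
    (hZm : Measurable Z) (hZ'm : Measurable Z') (hZ''m : Measurable Z'')
    (hUm : Measurable U)
    (hZ' : IdentDistrib Z' Z ℙ ℙ) (hZ'' : IdentDistrib Z'' Z ℙ ℙ)
    (hU : Measure.map U ℙ = volume.restrict (Set.Icc (0 : ℝ) 1))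
    (hindep : iIndepFun ![U, Z', Z''] ℙ)
    (hrec : IdentDistrib Z (fun ω => U ω * Z' ω + (1 - U ω) * Z'' ω + g (U ω)) ℙ ℙ)
    (hmean : ∫ ω, Z ω ∂ℙ = 0)
    (hmgf : ∀ t : ℝ, Integrable (fun ω => Real.exp (t * Z ω)) ℙ) :
    ∃ C > (0 : ℝ), ∃ x₀ > (0 : ℝ), ∀ x ≥ x₀,
      Real.exp (-x * Real.log x - x * Real.log (Real.log x) - C * x)
        ≤ (ℙ {ω | x ≤ Z ω}).toReal :=
  quicksort_right_tail_lower_bound_general Z Z' Z'' U g hg hUm hZ' hZ'' hU hindep hrec hmean hmgf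
end

section
/- There exist a constant C > 0 and a threshold x₀ > 0 such that for all x ≥ x₀, P(Z ≥ x) ≤ exp(−x·ln x + C·x). (Upper bound of Theorem 1(ii): right tail of the limiting Quicksort distribution.) -/
/-!
Chernoff's inequality at `t = log x` gives the bound as soon as the moment generating function
`ψ` of `Z` is dominated, for all `t ≥ 0`, by `exp (c (eᵗ - 1))`, the moment generating function
of a Poisson variable. Convexity of `ψ` gives this on `[0, 10]` for large `c`. Beyond that, the
fixed-point equation `ψ(t) = ∫₀¹ e^{t g(u)} ψ(tu) ψ(t(1-u)) du` transfers the bound from `[0, t)`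
to `t` with a factor `1/2` to spare: `g ≤ 1`, and `c (e^{tu} - 1)(e^{t(1-u)} - 1)` is the exponent
lost when the two Poisson bounds are multiplied, which is large except for `u` within `O(1/t)` of
the endpoints. Continuity of `ψ` then propagates the bound to all `t ≥ 0`.
-/

open MeasureTheory ProbabilityTheory Real Set

noncomputable def poissonMgf (c s : ℝ) : ℝ := exp (c * (exp s - 1))

lemma poissonMgf_pos (c s : ℝ) : 0 < poissonMgf c s := exp_pos _

lemma poissonMgf_mul_poissonMgf (c x y : ℝ) :
    poissonMgf c x * poissonMgf c y
      = poissonMgf c (x + y) * exp (-(c * ((exp x - 1) * (exp y - 1)))) := by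
  rw [poissonMgf, poissonMgf, poissonMgf, ← exp_add, ← exp_add, exp_add x y]
  ring_nf

lemma continuous_poissonMgf (c : ℝ) : Continuous (poissonMgf c) := by
  unfold poissonMgf; fun_prop

lemma one_add_mul_le_poissonMgf {c : ℝ} (hc : 0 ≤ c) (s : ℝ) :
    1 + c * s ≤ poissonMgf c s := by
  have hlin : c * s ≤ c * (exp s - 1) := by nlinarith [add_one_le_exp s]
  linarith [add_one_le_exp (c * (exp s - 1)), show poissonMgf c s = exp (c * (exp s - 1)) from rfl]

lemma mul_exp_sub_one_div_two_le_of_le_one {x y : ℝ} (hx₀ : 0 ≤ x) (hx₁ : x ≤ 1)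
    (hxy : 2 ≤ x + y) : x * (exp (x + y - 1) / 2) ≤ (exp x - 1) * (exp y - 1) := by
  have hx : x ≤ exp x - 1 := by linarith [add_one_le_exp x]
  have hy : exp (x + y - 1) / 2 ≤ exp y - 1 := by
    have h₁ : exp (x + y - 1) ≤ exp y := exp_le_exp.2 (by linarith)
    linarith [add_one_le_exp (x + y - 1)]
  exact mul_le_mul hx hy (by positivity) (by linarith)

lemma exp_half_div_two_le_of_one_lt {x y : ℝ} (hx : 1 < x) (hy : 1 < y) :
    exp ((x + y) / 2) / 2 ≤ (exp x - 1) * (exp y - 1) := by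
  wlog hyx : y ≤ x generalizing x y
  · rw [add_comm, mul_comm]; exact this hy hx (by linarith)
  have h₁ : exp ((x + y) / 2) / 2 ≤ exp x - 1 := by
    have hmono : exp ((x + y) / 2) ≤ exp x := exp_le_exp.2 (by linarith)
    linarith [add_one_le_exp ((x + y) / 2)]
  have h₂ : 1 ≤ exp y - 1 := by linarith [add_one_le_exp y]
  nlinarith [exp_pos ((x + y) / 2)]

lemma exp_neg_mul_exp_sub_one_mul_exp_sub_one_le {c t x y : ℝ} (hc : 0 ≤ c) (ht : 2 ≤ t)
    (hx : 0 ≤ x) (hy : 0 ≤ y) (hxy : x + y = t) :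
    exp (-(c * ((exp x - 1) * (exp y - 1))))
      ≤ exp (-(c * exp (t - 1) / 2) * x) + exp (-(c * exp (t - 1) / 2) * y)
        + exp (-(c * exp (t / 2) / 2)) := by
  have h₁ := exp_pos (-(c * exp (t - 1) / 2) * x)
  have h₂ := exp_pos (-(c * exp (t - 1) / 2) * y)
  have h₃ := exp_pos (-(c * exp (t / 2) / 2))
  subst hxy
  rcases le_or_gt x 1 with hx₁ | hx₁
  · have hP := mul_exp_sub_one_div_two_le_of_le_one hx hx₁ ht
    have hE : exp (-(c * ((exp x - 1) * (exp y - 1)))) ≤ exp (-(c * exp (x + y - 1) / 2) * x) :=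
      exp_le_exp.2 (by nlinarith)
    linarith
  rcases le_or_gt y 1 with hy₁ | hy₁
  · have hP := mul_exp_sub_one_div_two_le_of_le_one (y := x) hy hy₁ (by linarith)
    rw [add_comm y x, mul_comm (exp y - 1)] at hP
    have hE : exp (-(c * ((exp x - 1) * (exp y - 1)))) ≤ exp (-(c * exp (x + y - 1) / 2) * y) :=
      exp_le_exp.2 (by nlinarith)
    linarith
  · have hP := exp_half_div_two_le_of_one_lt hx₁ hy₁
    have hE : exp (-(c * ((exp x - 1) * (exp y - 1)))) ≤ exp (-(c * exp ((x + y) / 2) / 2)) :=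
      exp_le_exp.2 (by nlinarith)
    linarith

/-- The toll function `g` of the Quicksort fixed-point equation. -/
noncomputable def quicksortToll (u : ℝ) : ℝ := 2 * u * log u + 2 * (1 - u) * log (1 - u) + 1

lemma measurable_quicksortToll : Measurable quicksortToll := by
  unfold quicksortToll; fun_prop

lemma quicksortToll_le_one {u : ℝ} (hu : u ∈ Ioo 0 1) : quicksortToll u ≤ 1 := by
  unfold quicksortToll
  have h₁ : log u ≤ 0 := log_nonpos hu.1.le hu.2.le
  have h₂ : log (1 - u) ≤ 0 := log_nonpos (by linarith [hu.2]) (by linarith [hu.1])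
  nlinarith [hu.1, hu.2]

lemma setIntegral_Ioo_zero_one_comp_one_sub (f : ℝ → ℝ) :
    ∫ u in Ioo (0 : ℝ) 1, f (1 - u) = ∫ u in Ioo (0 : ℝ) 1, f u := by
  rw [Measure.restrict_congr_set Ioo_ae_eq_Ioc, ← intervalIntegral.integral_of_le zero_le_one,
    ← intervalIntegral.integral_of_le zero_le_one]
  simp [intervalIntegral.integral_comp_sub_left (a := 0) (b := 1) f 1]

lemma setIntegral_Ioo_zero_one_exp_neg_mul_le {a : ℝ} (ha : 0 < a) :
    ∫ u in Ioo (0 : ℝ) 1, exp (-a * u) ≤ 1 / a := by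
  calc ∫ u in Ioo (0 : ℝ) 1, exp (-a * u) ≤ ∫ u in Ioi (0 : ℝ), exp (-a * u) :=
        setIntegral_mono_set (exp_neg_integrableOn_Ioi 0 ha)
          (Filter.Eventually.of_forall fun _ => (exp_pos _).le) Ioo_subset_Ioi_self.eventuallyLE
    _ = 1 / a := by rw [integral_exp_mul_Ioi (by linarith)]; simp [neg_div]

lemma exp_mul_two_div_add_exp_neg_le_half {c t : ℝ} (hc : 10 ≤ c) (ht : 10 ≤ t) :
    exp t * (2 / (c * exp (t - 1) / 2 * t) + exp (-(c * exp (t / 2) / 2))) ≤ 1 / 2 := by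
  have hfirst : exp t * (2 / (c * exp (t - 1) / 2 * t)) ≤ 3 / 25 := by
    have he : exp t = exp 1 * exp (t - 1) := by rw [← exp_add]; ring_nf
    have hsimp : exp t * (2 / (c * exp (t - 1) / 2 * t)) = 4 * exp 1 / (c * t) := by
      rw [he]; field_simp; ring
    rw [hsimp, div_le_iff₀ (by positivity)]
    nlinarith [exp_one_lt_d9, exp_pos (t - 1), mul_le_mul hc ht (by norm_num) (by linarith)]
  have hsecond : exp t * exp (-(c * exp (t / 2) / 2)) ≤ 1 / 4 := by
    have hexp : t + 2 ≤ c * exp (t / 2) / 2 := by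
      nlinarith [add_one_le_exp (t / 2)]
    have he₂ : exp 2 = exp 1 * exp 1 := by rw [← exp_add]; norm_num
    have he₄ : 4 ≤ exp 2 := by nlinarith [add_one_le_exp 1]
    calc exp t * exp (-(c * exp (t / 2) / 2)) ≤ exp (-2) := by
          rw [← exp_add]; exact exp_le_exp.2 (by linarith)
      _ ≤ 1 / 4 := by rw [exp_neg]; exact inv_le_of_inv_le₀ (by norm_num) (by norm_num; linarith)
  linarith [mul_add (exp t) (2 / (c * exp (t - 1) / 2 * t)) (exp (-(c * exp (t / 2) / 2)))]

lemma setIntegral_exp_mul_exp_neg_add_le_half {c t : ℝ} (hc : 10 ≤ c) (ht : 10 ≤ t) :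
    ∫ u in Ioo (0 : ℝ) 1, exp t * (exp (-(c * exp (t - 1) / 2 * t) * u)
      + exp (-(c * exp (t - 1) / 2 * t) * (1 - u)) + exp (-(c * exp (t / 2) / 2))) ≤ 1 / 2 := by
  set a := c * exp (t - 1) / 2 * t
  set K := exp (-(c * exp (t / 2) / 2))
  have hint : ∀ f : ℝ → ℝ, Continuous f → IntegrableOn f (Ioo 0 1) :=
    fun f hf => hf.integrableOn_Icc.mono_set Ioo_subset_Icc_self
  have hI₁ := hint (fun u => exp (-a * u)) (by fun_prop)
  have hI₂ := hint (fun u => exp (-a * (1 - u))) (by fun_prop)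
  have hI := setIntegral_Ioo_zero_one_exp_neg_mul_le (a := a) (by positivity)
  rw [integral_const_mul, integral_add ?_ (hint (fun _ => K) continuous_const),
    integral_add hI₁ hI₂, setIntegral_const,
    setIntegral_Ioo_zero_one_comp_one_sub (fun u => exp (-a * u))]
  swap
  · exact hI₁.add hI₂
  calc exp t * ((∫ u in Ioo (0 : ℝ) 1, exp (-a * u))
        + (∫ u in Ioo (0 : ℝ) 1, exp (-a * u)) + volume.real (Ioo (0 : ℝ) 1) • K)
      ≤ exp t * (2 / a + K) := by
        rw [Real.volume_real_Ioo_of_le zero_le_one, sub_zero, one_smul]; gcongr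
        linarith [show 2 / a = 1 / a + 1 / a by ring]
    _ ≤ 1 / 2 := exp_mul_two_div_add_exp_neg_le_half hc ht

lemma setIntegral_quicksortToll_le_half_poissonMgf {ψ : ℝ → ℝ} {c t : ℝ} (hψ₀ : ∀ s, 0 ≤ ψ s)
    (hc : 10 ≤ c) (ht : 10 ≤ t) (hψ : ∀ s ∈ Ico 0 t, ψ s ≤ poissonMgf c s) :
    ∫ u in Ioo (0 : ℝ) 1, exp (t * quicksortToll u) * (ψ (t * u) * ψ (t * (1 - u)))
      ≤ poissonMgf c t / 2 := by
  set k := c * exp (t - 1) / 2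
  set K := exp (-(c * exp (t / 2) / 2))
  set H : ℝ → ℝ := fun u => exp t * (exp (-(k * t) * u) + exp (-(k * t) * (1 - u)) + K)
  have hH_int : IntegrableOn H (Ioo 0 1) :=
    (by fun_prop : Continuous H).integrableOn_Icc.mono_set Ioo_subset_Icc_self
  have hH_le : ∀ u ∈ Ioo (0 : ℝ) 1,
      exp (t * quicksortToll u) * (ψ (t * u) * ψ (t * (1 - u))) ≤ poissonMgf c t * H u := by
    intro u hu
    have hx : t * u ∈ Ico 0 t := ⟨by nlinarith [hu.1], by nlinarith [hu.2]⟩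
    have hy : t * (1 - u) ∈ Ico 0 t := ⟨by nlinarith [hu.2], by nlinarith [hu.1]⟩
    calc exp (t * quicksortToll u) * (ψ (t * u) * ψ (t * (1 - u)))
        ≤ exp t * (poissonMgf c (t * u) * poissonMgf c (t * (1 - u))) := by
          refine mul_le_mul (exp_le_exp.2 ?_) (mul_le_mul (hψ _ hx) (hψ _ hy) (hψ₀ _)
            (poissonMgf_pos _ _).le) (mul_nonneg (hψ₀ _) (hψ₀ _)) (exp_pos _).le
          nlinarith [quicksortToll_le_one hu]
      _ = poissonMgf c t
            * (exp t * exp (-(c * ((exp (t * u) - 1) * (exp (t * (1 - u)) - 1))))) := by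
          rw [poissonMgf_mul_poissonMgf, show t * u + t * (1 - u) = t by ring]; ring
      _ ≤ poissonMgf c t * (exp t * (exp (-k * (t * u)) + exp (-k * (t * (1 - u))) + K)) := by
          refine mul_le_mul_of_nonneg_left (mul_le_mul_of_nonneg_left ?_ (exp_pos t).le)
            (poissonMgf_pos c t).le
          exact exp_neg_mul_exp_sub_one_mul_exp_sub_one_le (c := c) (t := t) (by linarith)
            (by linarith) hx.1 hy.1 (by ring)
      _ = poissonMgf c t * H u := by simp only [H, neg_mul, mul_assoc]
  calc ∫ u in Ioo (0 : ℝ) 1, exp (t * quicksortToll u) * (ψ (t * u) * ψ (t * (1 - u)))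
      ≤ ∫ u in Ioo (0 : ℝ) 1, poissonMgf c t * H u := by
        refine integral_mono_of_nonneg (Filter.Eventually.of_forall fun u => ?_)
          (hH_int.const_mul _) ?_
        · exact mul_nonneg (exp_pos _).le (mul_nonneg (hψ₀ _) (hψ₀ _))
        · filter_upwards [ae_restrict_mem measurableSet_Ioo] with u hu using hH_le u hu
    _ = poissonMgf c t * ∫ u in Ioo (0 : ℝ) 1, H u := integral_const_mul _ _
    _ ≤ poissonMgf c t * (1 / 2) := by
        gcongr
        · exact (poissonMgf_pos c t).le
        · exact setIntegral_exp_mul_exp_neg_add_le_half hc ht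
    _ = poissonMgf c t / 2 := by ring

lemma forall_le_of_continuous_of_strict_step {f h : ℝ → ℝ} {a : ℝ} (hf : Continuous f)
    (hh : Continuous h) (hbase : ∀ s ∈ Icc 0 a, f s ≤ h s)
    (hstep : ∀ τ, a ≤ τ → (∀ s ∈ Ico 0 τ, f s ≤ h s) → f τ < h τ) :
    ∀ t, 0 ≤ t → f t ≤ h t := by
  by_contra! hbad
  set B := {t | 0 ≤ t ∧ h t < f t}
  have hB : B.Nonempty := hbad
  have hB_bdd : BddBelow B := ⟨0, fun _ hb => hb.1⟩
  have hbelow : ∀ s ∈ Ico 0 (sInf B), f s ≤ h s := fun s hs =>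
    not_lt.1 fun hlt => notMem_of_lt_csInf hs.2 hB_bdd ⟨hs.1, hlt⟩
  have ha : a ≤ sInf B := le_csInf hB fun b hb =>
    not_lt.1 fun hba => (hbase b ⟨hb.1, hba.le⟩).not_gt hb.2
  obtain ⟨ε, hε, hball⟩ := Metric.isOpen_iff.1 (isOpen_lt hf hh) _ (hstep _ ha hbelow)
  obtain ⟨b, hb, hbε⟩ := exists_lt_of_csInf_lt hB (lt_add_of_pos_right (sInf B) hε)
  have hb_ball : b ∈ Metric.ball (sInf B) ε := by
    rw [Real.ball_eq_Ioo]; exact ⟨by linarith [csInf_le hB_bdd hb], hbε⟩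
  exact (hball hb_ball).not_gt hb.2

lemma le_poissonMgf_of_eq_setIntegral_quicksortToll {ψ : ℝ → ℝ} {c : ℝ} (hψ₀ : ∀ s, 0 ≤ ψ s)
    (hψ : Continuous ψ) (hc : 10 ≤ c) (hbase : ∀ s ∈ Icc 0 10, ψ s ≤ poissonMgf c s)
    (hfix : ∀ t, ψ t
      = ∫ u in Ioo (0 : ℝ) 1, exp (t * quicksortToll u) * (ψ (t * u) * ψ (t * (1 - u)))) :
    ∀ t, 0 ≤ t → ψ t ≤ poissonMgf c t :=
  forall_le_of_continuous_of_strict_step hψ (continuous_poissonMgf c) hbase fun τ hτ hbelow =>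
    (hfix τ ▸ setIntegral_quicksortToll_le_half_poissonMgf hψ₀ hc hτ hbelow).trans_lt
      (half_lt_self (poissonMgf_pos c τ))

section Mgf

variable {Ω : Type*} {m : MeasurableSpace Ω} {X : Ω → ℝ} {μ : Measure Ω}

lemma convexOn_mgf (h : ∀ t, Integrable (fun ω => exp (t * X ω)) μ) :
    ConvexOn ℝ univ (mgf X μ) := by
  refine ⟨convex_univ, fun s _ t _ a b ha hb hab => ?_⟩
  have hint : Integrable (fun ω => exp (a * (s * X ω) + b * (t * X ω))) μ := by
    simpa only [add_mul, mul_assoc] using h (a * s + b * t)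
  calc mgf X μ (a • s + b • t) = ∫ ω, exp (a * (s * X ω) + b * (t * X ω)) ∂μ := by
        simp only [mgf, smul_eq_mul, add_mul, mul_assoc]
    _ ≤ ∫ ω, a * exp (s * X ω) + b * exp (t * X ω) ∂μ :=
        integral_mono hint (((h s).const_mul a).add ((h t).const_mul b)) fun ω =>
          convexOn_exp.2 trivial trivial ha hb hab
    _ = a • mgf X μ s + b • mgf X μ t := by
        rw [integral_add ((h s).const_mul a) ((h t).const_mul b), integral_const_mul,
          integral_const_mul]
        rfl

lemma mgf_le_poissonMgf_of_mem_Icc [IsProbabilityMeasure μ]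
    (h : ∀ t, Integrable (fun ω => exp (t * X ω)) μ) {T c s : ℝ} (hT : 0 < T)
    (hc : mgf X μ T / T ≤ c) (hs : s ∈ Icc 0 T) : mgf X μ s ≤ poissonMgf c s := by
  have hconv := (convexOn_mgf h).2 (mem_univ 0) (mem_univ T)
    (sub_nonneg.2 ((div_le_one hT).2 hs.2)) (div_nonneg hs.1 hT.le) (sub_add_cancel 1 (s / T))
  rw [smul_zero, zero_add, smul_eq_mul, div_mul_cancel₀ s hT.ne', mgf_zero, smul_eq_mul,
    smul_eq_mul] at hconv
  have hcs : s / T * mgf X μ T ≤ c * s := by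
    rw [show s / T * mgf X μ T = mgf X μ T / T * s by ring]
    exact mul_le_mul_of_nonneg_right hc hs.1
  have hc₀ : 0 ≤ c := (div_nonneg mgf_nonneg hT.le).trans hc
  linarith [one_add_mul_le_poissonMgf hc₀ s, div_nonneg hs.1 hT.le]

lemma measureReal_ge_le_of_mgf_le_poissonMgf [IsFiniteMeasure μ]
    (h : ∀ t, Integrable (fun ω => exp (t * X ω)) μ) {c : ℝ} (hc : 0 ≤ c)
    (hX : ∀ t, 0 ≤ t → mgf X μ t ≤ poissonMgf c t) {x : ℝ} (hx : 1 ≤ x) :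
    μ.real {ω | x ≤ X ω} ≤ exp (-x * log x + c * x) := by
  have hlog : 0 ≤ log x := log_nonneg hx
  calc μ.real {ω | x ≤ X ω} ≤ exp (-log x * x) * mgf X μ (log x) :=
        measure_ge_le_exp_mul_mgf x hlog (h _)
    _ ≤ exp (-log x * x) * poissonMgf c (log x) :=
        mul_le_mul_of_nonneg_left (hX _ hlog) (exp_pos _).le
    _ = exp (-x * log x + c * (x - 1)) := by
        rw [poissonMgf, exp_log (by linarith), ← exp_add]; ring_nf
    _ ≤ exp (-x * log x + c * x) := exp_le_exp.2 (by nlinarith)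

end Mgf

lemma map_prodMk_prodMk_eq_prod {Ω : Type*} [MeasureSpace Ω]
    [IsProbabilityMeasure (ℙ : Measure Ω)] {Z Z' Z'' U : Ω → ℝ} (hUm : AEMeasurable U ℙ)
    (hZ' : IdentDistrib Z' Z ℙ ℙ) (hZ'' : IdentDistrib Z'' Z ℙ ℙ)
    (hindep : iIndepFun ![U, Z', Z''] ℙ) :
    Measure.map (fun ω => (U ω, (Z' ω, Z'' ω))) ℙ
      = (Measure.map U ℙ).prod ((Measure.map Z ℙ).prod (Measure.map Z ℙ)) := by
  have hZ'm := hZ'.aemeasurable_fst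
  have hZ''m := hZ''.aemeasurable_fst
  have hUZZ : IndepFun (fun ω => (Z' ω, Z'' ω)) U ℙ := by
    simpa using hindep.indepFun_prodMk₀
      (by intro i; fin_cases i <;> simp [hUm, hZ'm, hZ''m]) 1 2 0 (by decide) (by decide)
  have hZZ : IndepFun Z' Z'' ℙ := hindep.indepFun (i := 1) (j := 2) (by decide)
  rw [(indepFun_iff_map_prod_eq_prod_map_map hUm (hZ'm.prodMk hZ''m)).1 hUZZ.symm,
    (indepFun_iff_map_prod_eq_prod_map_map hZ'm hZ''m).1 hZZ, hZ'.map_eq, hZ''.map_eq]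

lemma mgf_eq_setIntegral_mgf_mul_mgf {Ω : Type*} [MeasureSpace Ω]
    [IsProbabilityMeasure (ℙ : Measure Ω)] {Z Z' Z'' U : Ω → ℝ} {g : ℝ → ℝ} (hg : Measurable g)
    (hUm : Measurable U) (hZ' : IdentDistrib Z' Z ℙ ℙ) (hZ'' : IdentDistrib Z'' Z ℙ ℙ)
    (hU : Measure.map U ℙ = volume.restrict (Icc (0 : ℝ) 1)) (hindep : iIndepFun ![U, Z', Z''] ℙ)
    (hrec : IdentDistrib Z (fun ω => U ω * Z' ω + (1 - U ω) * Z'' ω + g (U ω)) ℙ ℙ) {t : ℝ}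
    (ht : Integrable (fun ω => exp (t * Z ω)) ℙ) :
    mgf Z ℙ t
      = ∫ u in Ioo (0 : ℝ) 1, exp (t * g u) * (mgf Z ℙ (t * u) * mgf Z ℙ (t * (1 - u))) := by
  set ν := Measure.map Z ℙ
  have hJm : AEMeasurable (fun ω => (U ω, (Z' ω, Z'' ω))) ℙ :=
    hUm.aemeasurable.prodMk (hZ'.aemeasurable_fst.prodMk hZ''.aemeasurable_fst)
  have hlaw := map_prodMk_prodMk_eq_prod hUm.aemeasurable hZ' hZ'' hindep
  rw [hU] at hlaw
  set F : ℝ × ℝ × ℝ → ℝ := fun p => exp (t * (p.1 * p.2.1 + (1 - p.1) * p.2.2 + g p.1))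
  have hFm : Measurable F := by fun_prop
  have hF_int : Integrable F ((volume.restrict (Icc (0 : ℝ) 1)).prod (ν.prod ν)) := by
    rw [← hlaw, integrable_map_measure hFm.aestronglyMeasurable hJm]
    exact (hrec.comp (measurable_const_mul t).exp).integrable_iff.1 ht
  have hν : ∀ s, ∫ z, exp (s * z) ∂ν = mgf Z ℙ s := fun s => by
    rw [← mgf_id_map hZ'.aemeasurable_snd]; rfl
  have hF_slice : ∀ u, ∫ q, F (u, q) ∂(ν.prod ν)
      = exp (t * g u) * (mgf Z ℙ (t * u) * mgf Z ℙ (t * (1 - u))) := fun u => by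
    have hsplit : ∀ q : ℝ × ℝ,
        F (u, q) = exp (t * g u) * (exp (t * u * q.1) * exp (t * (1 - u) * q.2)) := fun q => by
      simp only [F, ← exp_add]; ring_nf
    simp_rw [hsplit, integral_const_mul, integral_prod_mul (fun z => exp (t * u * z))
      (fun z => exp (t * (1 - u) * z)), hν]
  calc mgf Z ℙ t = ∫ ω, F (U ω, (Z' ω, Z'' ω)) := mgf_congr_of_identDistrib _ _ hrec t
    _ = ∫ p, F p ∂((volume.restrict (Icc (0 : ℝ) 1)).prod (ν.prod ν)) := by
        rw [← hlaw, integral_map hJm hFm.aestronglyMeasurable]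
    _ = ∫ u in Icc (0 : ℝ) 1, exp (t * g u) * (mgf Z ℙ (t * u) * mgf Z ℙ (t * (1 - u))) := by
        rw [integral_prod F hF_int]; simp_rw [hF_slice]
    _ = _ := by rw [Measure.restrict_congr_set Ioo_ae_eq_Icc]

theorem quicksort_right_tail_upper_bound_general
    {Ω : Type*} [MeasureSpace Ω] [IsProbabilityMeasure (ℙ : Measure Ω)]
    (Z Z' Z'' U : Ω → ℝ) (g : ℝ → ℝ)
    (hg : ∀ u : ℝ, g u = 2 * u * Real.log u + 2 * (1 - u) * Real.log (1 - u) + 1)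
    (hUm : Measurable U)
    (hZ' : IdentDistrib Z' Z ℙ ℙ) (hZ'' : IdentDistrib Z'' Z ℙ ℙ)
    (hU : Measure.map U ℙ = volume.restrict (Set.Icc (0 : ℝ) 1))
    (hindep : iIndepFun ![U, Z', Z''] ℙ)
    (hrec : IdentDistrib Z (fun ω => U ω * Z' ω + (1 - U ω) * Z'' ω + g (U ω)) ℙ ℙ)
    (hmgf : ∀ t : ℝ, Integrable (fun ω => Real.exp (t * Z ω)) ℙ) :
    ∃ C > (0 : ℝ), ∃ x₀ > (0 : ℝ), ∀ x ≥ x₀,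
      (ℙ {ω | x ≤ Z ω}).toReal ≤ Real.exp (-x * Real.log x + C * x) := by
  obtain rfl : g = quicksortToll := funext hg
  set c := mgf Z ℙ 10 / 10 + 10
  have hc : 10 ≤ c := le_add_of_nonneg_left (div_nonneg mgf_nonneg (by norm_num))
  have hZ : ∀ t, 0 ≤ t → mgf Z ℙ t ≤ poissonMgf c t :=
    le_poissonMgf_of_eq_setIntegral_quicksortToll (fun _ => mgf_nonneg) (continuous_mgf hmgf) hc
      (fun _ => mgf_le_poissonMgf_of_mem_Icc hmgf (by norm_num)
        (le_add_of_nonneg_right (by norm_num)))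
      (fun t => mgf_eq_setIntegral_mgf_mul_mgf measurable_quicksortToll hUm hZ' hZ'' hU hindep hrec
        (hmgf t))
  exact ⟨c, by linarith, 1, one_pos, fun x hx =>
    measureReal_ge_le_of_mgf_le_poissonMgf hmgf (by linarith) hZ hx⟩

/-- Upper bound of Theorem 1(ii): there are `C > 0` and `x₀ > 0` such
that for all `x ≥ x₀`, `P(Z ≥ x) ≤ exp(-x·ln x + C·x)`. -/
theorem quicksort_right_tail_upper_bound
    {Ω : Type*} [MeasureSpace Ω] [IsProbabilityMeasure (ℙ : Measure Ω)]
    (Z Z' Z'' U : Ω → ℝ) (g : ℝ → ℝ)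
    (hg : ∀ u : ℝ, g u = 2 * u * Real.log u + 2 * (1 - u) * Real.log (1 - u) + 1)
    (hZm : Measurable Z) (hZ'm : Measurable Z') (hZ''m : Measurable Z'')
    (hUm : Measurable U)
    (hZ' : IdentDistrib Z' Z ℙ ℙ) (hZ'' : IdentDistrib Z'' Z ℙ ℙ)
    (hU : Measure.map U ℙ = volume.restrict (Set.Icc (0 : ℝ) 1))
    (hindep : iIndepFun ![U, Z', Z''] ℙ)
    (hrec : IdentDistrib Z (fun ω => U ω * Z' ω + (1 - U ω) * Z'' ω + g (U ω)) ℙ ℙ)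
    (hmean : ∫ ω, Z ω ∂ℙ = 0)
    (hmgf : ∀ t : ℝ, Integrable (fun ω => Real.exp (t * Z ω)) ℙ) :
    ∃ C > (0 : ℝ), ∃ x₀ > (0 : ℝ), ∀ x ≥ x₀,
      (ℙ {ω | x ≤ Z ω}).toReal ≤ Real.exp (-x * Real.log x + C * x) :=
  quicksort_right_tail_upper_bound_general Z Z' Z'' U g hg hUm hZ' hZ'' hU hindep hrec hmgf
end

section
/- There exists a constant C > 0 such that for all x ≥ 2, P(Z ≥ x) ≤ exp(−x·ln x + x + C·ln x). (Sharper right-tail upper bound obtained in the proof, equation (ql).) -/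
open MeasureTheory ProbabilityTheory Real Set

/-!
Let `ψ` be the moment generating function of `Z`. The fixed-point equation and `g ≤ 1` on `[0,1]`
give `ψ t ≤ e^t ∫₀¹ ψ(tu) ψ(t(1-u)) du` for `t ≥ 0`. Put `F s = exp (e^s + C s)` with
`C = ψ 240`. Convexity of `ψ` gives `ψ ≤ F` on `[0, 240]`, and for `t ≥ 240` one has
`e^t ∫₀¹ F(tu) F(t(1-u)) du ≤ F t / 2`, because `(e^{tu} - 1)(e^{t(1-u)} - 1)` is large unless
`u` lies within `O(e^{-t}/t)` of an endpoint. At a first point where `ψ` would exceed `F` this is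
a contradiction, so `ψ ≤ F` on `[0, ∞)`, and the Chernoff bound at `t = log x` gives
`P(Z ≥ x) ≤ e^{-x log x} ψ(log x) ≤ exp (-x log x + x + C log x)`.
-/

lemma exp_mul_le_one_add_exp {u : ℝ} (hu0 : 0 ≤ u) (hu1 : u ≤ 1) (w : ℝ) :
    exp (u * w) ≤ 1 + exp w := by
  rcases le_total w 0 with hw | hw
  · linarith [exp_le_one_iff.mpr (mul_nonpos_of_nonneg_of_nonpos hu0 hw), exp_pos w]
  · linarith [exp_le_exp.mpr (mul_le_of_le_one_left hw hu1)]

lemma two_mul_mul_log_add_le_one {u : ℝ} (hu0 : 0 ≤ u) (hu1 : u ≤ 1) :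
    2 * u * log u + 2 * (1 - u) * log (1 - u) + 1 ≤ 1 := by
  have h₁ := log_nonpos hu0 hu1
  have h₂ := log_nonpos (sub_nonneg.mpr hu1) (sub_le_self 1 hu0)
  nlinarith

lemma exp_neg_mul_exp_sub_one_le_of_le {a b : ℝ} (ha : 0 ≤ a) (hab : a ≤ b) (h2 : 2 ≤ a + b) :
    exp (-((exp a - 1) * (exp b - 1))) ≤
      exp (-(a * exp (a + b - 1) / 2)) + exp (-exp ((a + b) / 2)) := by
  have hb1 : 0 ≤ exp b - 1 := by linarith [add_one_le_exp b]
  rcases le_total a 1 with ha1 | ha1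
  · have hP : a * exp (a + b - 1) / 2 ≤ (exp a - 1) * (exp b - 1) := by
      have hb : exp (a + b - 1) ≤ exp b := exp_le_exp.mpr (by linarith)
      have h2e : 2 ≤ exp (a + b - 1) := by linarith [add_one_le_exp (a + b - 1)]
      have := add_one_le_exp a
      nlinarith
    linarith [exp_le_exp.mpr (neg_le_neg hP), exp_pos (-exp ((a + b) / 2))]
  · -- `a ≥ 1` and `b ≥ (a + b) / 2`, so the product is at least `(e - 1) (e^{(a+b)/2} - 1)`.
    have hP : exp ((a + b) / 2) ≤ (exp a - 1) * (exp b - 1) := by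
      have he : 2.7 < exp 1 := lt_trans (by norm_num) exp_one_gt_d9
      have hea : exp 1 ≤ exp a := exp_le_exp.mpr ha1
      have heb : exp ((a + b) / 2) ≤ exp b := exp_le_exp.mpr (by linarith)
      have : exp 1 ≤ exp ((a + b) / 2) := exp_le_exp.mpr (by linarith)
      nlinarith [mul_le_mul (by linarith : exp 1 - 1 ≤ exp a - 1)
        (by linarith : exp ((a + b) / 2) - 1 ≤ exp b - 1) (by linarith) (by linarith)]
    linarith [exp_le_exp.mpr (neg_le_neg hP), exp_pos (-(a * exp (a + b - 1) / 2))]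

lemma exp_neg_mul_exp_sub_one_le {a b : ℝ} (ha : 0 ≤ a) (hb : 0 ≤ b) (h2 : 2 ≤ a + b) :
    exp (-((exp a - 1) * (exp b - 1))) ≤
      exp (-(a * exp (a + b - 1) / 2)) + exp (-(b * exp (a + b - 1) / 2)) +
        exp (-exp ((a + b) / 2)) := by
  rcases le_total a b with hab | hba
  · linarith [exp_neg_mul_exp_sub_one_le_of_le ha hab h2, exp_pos (-(b * exp (a + b - 1) / 2))]
  · have := exp_neg_mul_exp_sub_one_le_of_le hb hba (by linarith)
    rw [mul_comm, add_comm b a] at this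
    linarith [exp_pos (-(a * exp (a + b - 1) / 2))]

lemma setIntegral_Icc_exp_neg_mul_le {c : ℝ} (hc : 0 < c) :
    ∫ u in Icc (0 : ℝ) 1, exp (-c * u) ≤ 1 / c := by
  calc ∫ u in Icc (0 : ℝ) 1, exp (-c * u) = ∫ u in Ioc (0 : ℝ) 1, exp (-c * u) :=
        integral_Icc_eq_integral_Ioc
    _ ≤ ∫ u in Ioi (0 : ℝ), exp (-c * u) :=
        setIntegral_mono_set (integrableOn_exp_mul_Ioi (by linarith) 0)
          (.of_forall fun _ => (exp_pos _).le) Ioc_subset_Ioi_self.eventuallyLE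
    _ = 1 / c := by rw [integral_exp_mul_Ioi (by linarith)]; field_simp; simp

lemma setIntegral_Icc_exp_neg_mul_one_sub_le {c : ℝ} (hc : 0 < c) :
    ∫ u in Icc (0 : ℝ) 1, exp (-c * (1 - u)) ≤ 1 / c := by
  have := intervalIntegral.integral_comp_sub_left (fun u => exp (-c * u)) (1 : ℝ) (a := 0) (b := 1)
  rw [integral_Icc_eq_integral_Ioc, ← intervalIntegral.integral_of_le zero_le_one]
  simp only [sub_zero, sub_self] at this
  rw [this, intervalIntegral.integral_of_le zero_le_one, ← integral_Icc_eq_integral_Ioc]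
  exact setIntegral_Icc_exp_neg_mul_le hc

lemma exp_add_one_mul_add_exp_neg_exp_le {t : ℝ} (ht : 240 ≤ t) :
    exp (t + 1) * (4 / (t * exp (t - 1)) + exp (-exp (t / 2))) ≤ 1 / 2 := by
  have h₁ : exp (t + 1) * (4 / (t * exp (t - 1))) ≤ 1 / 4 := by
    have he : exp (t + 1) = exp 2 * exp (t - 1) := by rw [← exp_add]; ring_nf
    have he2 : exp 2 < 9 := by
      have : exp 2 = exp 1 * exp 1 := by rw [← exp_add]; norm_num
      nlinarith [exp_one_lt_d9, exp_pos 1]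
    rw [he, mul_div_assoc', div_le_iff₀ (by positivity)]
    nlinarith [exp_pos (t - 1)]
  have h₂ : exp (t + 1) * exp (-exp (t / 2)) ≤ 1 / 4 := by
    -- `e^{t/2} ≥ (1 + t/4)^2 ≥ 2t + 1`
    have hq : exp (t / 2) = exp (t / 4) * exp (t / 4) := by rw [← exp_add]; ring_nf
    have h4 := add_one_le_exp (t / 4)
    have hexp : t + 1 - exp (t / 2) ≤ -t := by nlinarith
    rw [← exp_add, ← sub_eq_add_neg]
    calc exp (t + 1 - exp (t / 2)) ≤ exp (-t) := exp_le_exp.mpr hexp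
      _ = (exp t)⁻¹ := exp_neg t
      _ ≤ 1 / 4 := by rw [inv_eq_one_div]; gcongr; linarith [add_one_le_exp t]
  linarith [mul_add (exp (t + 1)) (4 / (t * exp (t - 1))) (exp (-exp (t / 2)))]

lemma setIntegral_Icc_exp_exp_add_exp_le {t : ℝ} (ht : 240 ≤ t) :
    ∫ u in Icc (0 : ℝ) 1, exp (exp (t * u) + exp (t * (1 - u))) ≤ exp (exp t - t) / 2 := by
  set c := t * exp (t - 1) / 2 with hc
  have hc0 : 0 < c := by positivity
  have hpt : ∀ u ∈ Icc (0 : ℝ) 1, exp (exp (t * u) + exp (t * (1 - u))) ≤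
      exp (exp t + 1) * (exp (-c * u) + exp (-c * (1 - u)) + exp (-exp (t / 2))) := by
    intro u ⟨hu0, hu1⟩
    have hab : t * u + t * (1 - u) = t := by ring
    have key := exp_neg_mul_exp_sub_one_le (a := t * u) (b := t * (1 - u)) (by positivity)
      (mul_nonneg (by linarith) (by linarith)) (by linarith)
    -- `e^a + e^b = e^{a+b} + 1 - (e^a - 1)(e^b - 1)`
    have hsplit : exp (exp (t * u) + exp (t * (1 - u))) =
        exp (exp t + 1) * exp (-((exp (t * u) - 1) * (exp (t * (1 - u)) - 1))) := by
      have hprod : exp (t * u) * exp (t * (1 - u)) = exp t := by rw [← exp_add, hab]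
      rw [← exp_add]; congr 1; linear_combination hprod
    rw [hab] at key
    rw [hsplit]
    refine mul_le_mul_of_nonneg_left (key.trans_eq ?_) (exp_pos _).le
    rw [hc]; ring_nf
  have hint : ∀ f : ℝ → ℝ, Continuous f → IntegrableOn f (Icc (0 : ℝ) 1) :=
    fun f hf => hf.integrableOn_Icc
  calc ∫ u in Icc (0 : ℝ) 1, exp (exp (t * u) + exp (t * (1 - u)))
      ≤ ∫ u in Icc (0 : ℝ) 1,
          exp (exp t + 1) * (exp (-c * u) + exp (-c * (1 - u)) + exp (-exp (t / 2))) :=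
        setIntegral_mono_on (hint _ (by fun_prop)) (hint _ (by fun_prop)) measurableSet_Icc hpt
    _ = exp (exp t + 1) * ((∫ u in Icc (0 : ℝ) 1, exp (-c * u)) +
          (∫ u in Icc (0 : ℝ) 1, exp (-c * (1 - u))) + exp (-exp (t / 2))) := by
        rw [integral_const_mul,
          integral_add (hint (fun u => exp (-c * u) + exp (-c * (1 - u))) (by fun_prop))
            (hint _ continuous_const),
          integral_add (hint (fun u => exp (-c * u)) (by fun_prop))
            (hint (fun u => exp (-c * (1 - u))) (by fun_prop))]
        simp
    _ ≤ exp (exp t + 1) * (1 / c + 1 / c + exp (-exp (t / 2))) := by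
        gcongr
        exacts [setIntegral_Icc_exp_neg_mul_le hc0, setIntegral_Icc_exp_neg_mul_one_sub_le hc0]
    _ = exp (exp t - t) * (exp (t + 1) * (4 / (t * exp (t - 1)) + exp (-exp (t / 2)))) := by
        rw [hc, ← mul_assoc, ← exp_add]; ring_nf
    _ ≤ exp (exp t - t) / 2 :=
        (mul_le_mul_of_nonneg_left (exp_add_one_mul_add_exp_neg_exp_le ht)
          (exp_pos _).le).trans_eq (by ring)

lemma le_of_le_on_Icc_of_lt_of_le_on_Ico {f g : ℝ → ℝ} (hf : Continuous f) (hg : Continuous g)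
    {a : ℝ} (hbase : ∀ s ∈ Icc 0 a, f s ≤ g s)
    (hstep : ∀ c, a ≤ c → (∀ s ∈ Ico 0 c, f s ≤ g s) → f c < g c) :
    ∀ s, 0 ≤ s → f s ≤ g s := by
  by_contra! hbad
  obtain ⟨s₀, hs₀, hlt₀⟩ := hbad
  -- the infimum of the counterexamples is a counterexample to the strict step
  set A := {s | 0 ≤ s ∧ g s < f s}
  have hA : A.Nonempty := ⟨s₀, hs₀, hlt₀⟩
  have hAbdd : BddBelow A := ⟨0, fun s hs => hs.1⟩
  have hac : a ≤ sInf A := le_csInf hA fun s ⟨hs0, hs⟩ =>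
    not_lt.mp fun hsa => (hbase s ⟨hs0, hsa.le⟩).not_gt hs
  have hbelow : ∀ s ∈ Ico 0 (sInf A), f s ≤ g s := fun s ⟨hs0, hsc⟩ =>
    not_lt.mp fun hs => (csInf_le hAbdd ⟨hs0, hs⟩).not_gt hsc
  have hc : g (sInf A) ≤ f (sInf A) :=
    closure_minimal (fun s hs => hs.2.le) (isClosed_le hg hf) (csInf_mem_closure hA hAbdd)
  exact (hstep _ hac hbelow).not_ge hc

lemma le_exp_exp_add_mul_of_le_setIntegral {ψ : ℝ → ℝ} (hψ : Continuous ψ) (hψ0 : ∀ s, 0 ≤ ψ s)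
    {C : ℝ} (hbase : ∀ s ∈ Icc (0 : ℝ) 240, ψ s ≤ exp (exp s + C * s))
    (hrec : ∀ t, 0 ≤ t → ψ t ≤ ∫ u in Icc (0 : ℝ) 1, exp t * ψ (t * u) * ψ (t * (1 - u))) :
    ∀ s, 0 ≤ s → ψ s ≤ exp (exp s + C * s) := by
  refine le_of_le_on_Icc_of_lt_of_le_on_Ico hψ (by fun_prop) hbase fun c hc hbelow => ?_
  have hc0 : 0 < c := by linarith
  have hpt : ∀ u ∈ Ioo (0 : ℝ) 1, exp c * ψ (c * u) * ψ (c * (1 - u)) ≤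
      exp ((1 + C) * c) * exp (exp (c * u) + exp (c * (1 - u))) := by
    intro u ⟨hu0, hu1⟩
    have h₁ := hbelow (c * u) ⟨by positivity, by nlinarith⟩
    have h₂ := hbelow (c * (1 - u)) ⟨by nlinarith, by nlinarith⟩
    calc exp c * ψ (c * u) * ψ (c * (1 - u))
        ≤ exp c * exp (exp (c * u) + C * (c * u)) *
            exp (exp (c * (1 - u)) + C * (c * (1 - u))) := by
          gcongr
          exact hψ0 _
      _ = exp ((1 + C) * c) * exp (exp (c * u) + exp (c * (1 - u))) := by
          simp only [← exp_add]; ring_nf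
  have hint : ∀ f : ℝ → ℝ, Continuous f → IntegrableOn f (Ioo (0 : ℝ) 1) :=
    fun f hf => hf.integrableOn_Icc.mono_set Ioo_subset_Icc_self
  calc ψ c ≤ ∫ u in Icc (0 : ℝ) 1, exp c * ψ (c * u) * ψ (c * (1 - u)) := hrec c hc0.le
    _ = ∫ u in Ioo (0 : ℝ) 1, exp c * ψ (c * u) * ψ (c * (1 - u)) := integral_Icc_eq_integral_Ioo
    _ ≤ ∫ u in Ioo (0 : ℝ) 1, exp ((1 + C) * c) * exp (exp (c * u) + exp (c * (1 - u))) :=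
        setIntegral_mono_on (hint _ (by fun_prop)) (hint _ (by fun_prop)) measurableSet_Ioo hpt
    _ = exp ((1 + C) * c) * ∫ u in Icc (0 : ℝ) 1, exp (exp (c * u) + exp (c * (1 - u))) := by
        rw [integral_const_mul, integral_Icc_eq_integral_Ioo]
    _ ≤ exp ((1 + C) * c) * (exp (exp c - c) / 2) := by
        gcongr; exact setIntegral_Icc_exp_exp_add_exp_le hc
    _ = exp (exp c + C * c) / 2 := by rw [mul_div_assoc', ← exp_add]; ring_nf
    _ < exp (exp c + C * c) := half_lt_self (exp_pos _)

lemma mgf_le_one_sub_add_mul_mgf {Ω : Type*} [MeasurableSpace Ω] {X : Ω → ℝ} {μ : Measure Ω}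
    [IsProbabilityMeasure μ] {s T : ℝ} (hT : 0 < T) (hs0 : 0 ≤ s) (hsT : s ≤ T)
    (hint : Integrable (fun ω => exp (T * X ω)) μ) :
    mgf X μ s ≤ 1 - s / T + s / T * mgf X μ T := by
  have hθ0 : 0 ≤ s / T := div_nonneg hs0 hT.le
  have hθ1 : s / T ≤ 1 := (div_le_one hT).mpr hsT
  have hpt : ∀ ω, exp (s * X ω) ≤ (1 - s / T) + s / T * exp (T * X ω) := by
    intro ω
    have := convexOn_exp.2 (mem_univ 0) (mem_univ (T * X ω)) (sub_nonneg.mpr hθ1) hθ0 (by ring)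
    simp only [smul_eq_mul, mul_zero, zero_add, exp_zero, mul_one] at this
    rwa [← mul_assoc, div_mul_cancel₀ s hT.ne'] at this
  calc mgf X μ s ≤ ∫ ω, (1 - s / T) + s / T * exp (T * X ω) ∂μ :=
        integral_mono_of_nonneg (.of_forall fun ω => (exp_pos _).le)
          ((integrable_const _).add (hint.const_mul _)) (.of_forall hpt)
    _ = 1 - s / T + s / T * mgf X μ T := by
        rw [integral_add (integrable_const _) (hint.const_mul _), integral_const_mul]
        simp [mgf]

lemma mgf_le_exp_exp_add_mul_of_mem_Icc {Ω : Type*} [MeasurableSpace Ω] {X : Ω → ℝ}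
    {μ : Measure Ω} [IsProbabilityMeasure μ] {s T : ℝ} (hT : 1 ≤ T) (hs : s ∈ Icc 0 T)
    (hint : Integrable (fun ω => exp (T * X ω)) μ) :
    mgf X μ s ≤ exp (exp s + mgf X μ T * s) := by
  have hmgf : 0 ≤ mgf X μ T := mgf_nonneg
  have hθ : s / T ≤ s := div_le_self hs.1 hT
  calc mgf X μ s ≤ 1 - s / T + s / T * mgf X μ T :=
        mgf_le_one_sub_add_mul_mgf (by linarith) hs.1 hs.2 hint
    _ ≤ 1 + mgf X μ T * s := by nlinarith [div_nonneg hs.1 (by linarith : (0 : ℝ) ≤ T)]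
    _ ≤ exp (mgf X μ T * s) := by linarith [add_one_le_exp (mgf X μ T * s)]
    _ ≤ exp (exp s + mgf X μ T * s) := exp_le_exp.mpr (by linarith [exp_pos s])

lemma integral_exp_mul_affine_prod {μ : Measure ℝ} [IsFiniteMeasure μ] {h : ℝ → ℝ}
    (hh : Measurable h) {M : ℝ} (hhM : ∀ u ∈ Icc (0 : ℝ) 1, h u ≤ M) {t : ℝ} (ht : 0 ≤ t)
    (hint : Integrable (fun z => exp (t * z)) μ) :
    ∫ p : ℝ × ℝ × ℝ, exp (t * (p.1 * p.2.1 + (1 - p.1) * p.2.2 + h p.1))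
        ∂((volume.restrict (Icc (0 : ℝ) 1)).prod (μ.prod μ)) =
      ∫ u in Icc (0 : ℝ) 1, exp (t * h u) * mgf id μ (t * u) * mgf id μ (t * (1 - u)) := by
  have hsplit : ∀ (u : ℝ) (q : ℝ × ℝ), exp (t * (u * q.1 + (1 - u) * q.2 + h u)) =
      exp (t * h u) * (exp (u * (t * q.1)) * exp ((1 - u) * (t * q.2))) := by
    intro u q; simp only [← exp_add]; ring_nf
  set ν := (volume.restrict (Icc (0 : ℝ) 1)).prod (μ.prod μ)
  have hmem : ∀ᵐ p ∂ν, p.1 ∈ Icc (0 : ℝ) 1 :=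
    Measure.quasiMeasurePreserving_fst.ae (ae_restrict_mem measurableSet_Icc)
  have hbound : Integrable (fun p : ℝ × ℝ × ℝ =>
      exp (t * M) * ((1 + exp (t * p.2.1)) * (1 + exp (t * p.2.2)))) ν :=
    (integrable_const _).mul_prod
      (((integrable_const 1).add hint).mul_prod ((integrable_const 1).add hint))
  have hfint : Integrable
      (fun p : ℝ × ℝ × ℝ => exp (t * (p.1 * p.2.1 + (1 - p.1) * p.2.2 + h p.1))) ν := by
    refine hbound.mono' (by fun_prop) ?_
    filter_upwards [hmem] with p ⟨hp0, hp1⟩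
    rw [norm_of_nonneg (exp_pos _).le, hsplit]
    gcongr
    · exact hhM _ ⟨hp0, hp1⟩
    · exact exp_mul_le_one_add_exp hp0 hp1 _
    · exact exp_mul_le_one_add_exp (sub_nonneg.mpr hp1) (sub_le_self 1 hp0) _
  rw [integral_prod _ hfint]
  refine setIntegral_congr_fun measurableSet_Icc fun u _ => ?_
  simp_rw [hsplit u, integral_const_mul, integral_prod_mul (f := fun x => exp (u * (t * x)))
    (g := fun x => exp ((1 - u) * (t * x)))]
  simp only [mgf, id, mul_assoc]
  ring_nf

lemma ProbabilityTheory.iIndepFun.map_prodMk_prodMk_eq_prod {Ω β : Type*} [MeasurableSpace Ω]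
    [MeasurableSpace β] {P : Measure Ω} [IsProbabilityMeasure P] {f : Fin 3 → Ω → β}
    (hindep : iIndepFun f P) (hf : ∀ i, AEMeasurable (f i) P) :
    P.map (fun ω => (f 0 ω, f 1 ω, f 2 ω)) =
      (P.map (f 0)).prod ((P.map (f 1)).prod (P.map (f 2))) := by
  have h₁₂ := (indepFun_iff_map_prod_eq_prod_map_map (hf 1) (hf 2)).mp
    (hindep.indepFun (by decide : (1 : Fin 3) ≠ 2))
  rw [← h₁₂]
  exact (indepFun_iff_map_prod_eq_prod_map_map (hf 0) ((hf 1).prodMk (hf 2))).mp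
    (hindep.indepFun_prodMk₀ hf 1 2 0 (by decide) (by decide)).symm

lemma mgf_mul_add_one_sub_mul_add_eq {Ω : Type*} [MeasurableSpace Ω] {P : Measure Ω}
    [IsProbabilityMeasure P] {Z Z' Z'' U : Ω → ℝ} {h : ℝ → ℝ} (hh : Measurable h) {M : ℝ}
    (hhM : ∀ u ∈ Icc (0 : ℝ) 1, h u ≤ M) (hZ' : IdentDistrib Z' Z P P)
    (hZ'' : IdentDistrib Z'' Z P P) (hU : P.map U = volume.restrict (Icc (0 : ℝ) 1))
    (hindep : iIndepFun ![U, Z', Z''] P) {t : ℝ} (ht : 0 ≤ t)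
    (hint : Integrable (fun ω => exp (t * Z ω)) P) :
    mgf (fun ω => U ω * Z' ω + (1 - U ω) * Z'' ω + h (U ω)) P t =
      ∫ u in Icc (0 : ℝ) 1, exp (t * h u) * mgf Z P (t * u) * mgf Z P (t * (1 - u)) := by
  have hUm : AEMeasurable U P := .of_map_ne_zero (by simp [hU, Measure.restrict_eq_zero])
  have hZm : AEMeasurable Z P := hZ'.aemeasurable_snd
  have hZ'm : AEMeasurable Z' P := hZ'.aemeasurable_fst
  have hZ''m : AEMeasurable Z'' P := hZ''.aemeasurable_fst
  have hmeas : ∀ i, AEMeasurable (![U, Z', Z''] i) P := by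
    intro i; fin_cases i
    exacts [hUm, hZ'm, hZ''m]
  have hlaw : P.map (fun ω => (U ω, Z' ω, Z'' ω)) =
      (volume.restrict (Icc (0 : ℝ) 1)).prod ((P.map Z).prod (P.map Z)) := by
    simpa [hU, hZ'.map_eq, hZ''.map_eq] using hindep.map_prodMk_prodMk_eq_prod hmeas
  have hintμ : Integrable (fun z => exp (t * z)) (P.map Z) :=
    (integrable_map_measure (by fun_prop) hZm).mpr hint
  rw [← mgf_id_map hZm, ← integral_exp_mul_affine_prod hh hhM ht hintμ, ← hlaw,
    integral_map (hUm.prodMk (hZ'm.prodMk hZ''m)) (by fun_prop)]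
  rfl

lemma mgf_le_setIntegral_of_identDistrib {Ω : Type*} [MeasurableSpace Ω] {P : Measure Ω}
    [IsProbabilityMeasure P] {Z Z' Z'' U : Ω → ℝ} {h : ℝ → ℝ} (hh : Measurable h)
    (hh1 : ∀ u ∈ Icc (0 : ℝ) 1, h u ≤ 1) (hZ' : IdentDistrib Z' Z P P)
    (hZ'' : IdentDistrib Z'' Z P P) (hU : P.map U = volume.restrict (Icc (0 : ℝ) 1))
    (hindep : iIndepFun ![U, Z', Z''] P)
    (hrec : IdentDistrib Z (fun ω => U ω * Z' ω + (1 - U ω) * Z'' ω + h (U ω)) P P)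
    (hmgf : ∀ t, Integrable (fun ω => exp (t * Z ω)) P) {t : ℝ} (ht : 0 ≤ t) :
    mgf Z P t ≤ ∫ u in Icc (0 : ℝ) 1, exp t * mgf Z P (t * u) * mgf Z P (t * (1 - u)) := by
  have hψ : Continuous (mgf Z P) := continuous_mgf hmgf
  rw [mgf_congr_of_identDistrib Z _ hrec t,
    mgf_mul_add_one_sub_mul_add_eq hh hh1 hZ' hZ'' hU hindep ht (hmgf t)]
  refine integral_mono_of_nonneg
    (.of_forall fun u => mul_nonneg (mul_nonneg (exp_pos _).le mgf_nonneg) mgf_nonneg)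
    ((by fun_prop : Continuous _).integrableOn_Icc)
    (ae_restrict_of_forall_mem measurableSet_Icc fun u hu => ?_)
  have : t * h u ≤ t := by nlinarith [hh1 u hu]
  exact mul_le_mul_of_nonneg_right
    (mul_le_mul_of_nonneg_right (exp_le_exp.mpr this) mgf_nonneg) mgf_nonneg

theorem quicksort_right_tail_upper_bound_sharp_general
    {Ω : Type*} [MeasureSpace Ω] [IsProbabilityMeasure (ℙ : Measure Ω)]
    (Z Z' Z'' U : Ω → ℝ) (g : ℝ → ℝ)
    (hg : ∀ u : ℝ, g u = 2 * u * Real.log u + 2 * (1 - u) * Real.log (1 - u) + 1)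
    (hZ' : IdentDistrib Z' Z ℙ ℙ) (hZ'' : IdentDistrib Z'' Z ℙ ℙ)
    (hU : Measure.map U ℙ = volume.restrict (Set.Icc (0 : ℝ) 1))
    (hindep : iIndepFun ![U, Z', Z''] ℙ)
    (hrec : IdentDistrib Z (fun ω => U ω * Z' ω + (1 - U ω) * Z'' ω + g (U ω)) ℙ ℙ)
    (hmgf : ∀ t : ℝ, Integrable (fun ω => Real.exp (t * Z ω)) ℙ) :
    ∃ C > (0 : ℝ), ∀ x ≥ (2 : ℝ),
      (ℙ {ω | x ≤ Z ω}).toReal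
        ≤ Real.exp (-x * Real.log x + x + C * Real.log x) := by
  have hgm : Measurable g := by rw [funext hg]; fun_prop
  have hg1 : ∀ u ∈ Icc (0 : ℝ) 1, g u ≤ 1 := fun u hu =>
    (hg u).trans_le (two_mul_mul_log_add_le_one hu.1 hu.2)
  have hψ : ∀ s, 0 ≤ s → mgf Z ℙ s ≤ exp (exp s + mgf Z ℙ 240 * s) :=
    le_exp_exp_add_mul_of_le_setIntegral (continuous_mgf hmgf) (fun _ => mgf_nonneg)
      (fun s hs => mgf_le_exp_exp_add_mul_of_mem_Icc (by norm_num) hs (hmgf 240))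
      (fun t ht => mgf_le_setIntegral_of_identDistrib hgm hg1 hZ' hZ'' hU hindep hrec hmgf ht)
  refine ⟨mgf Z ℙ 240, mgf_pos (hmgf 240), fun x hx => ?_⟩
  have hlog : 0 ≤ log x := log_nonneg (by linarith)
  calc (ℙ {ω | x ≤ Z ω}).toReal
      ≤ exp (-log x * x) * mgf Z ℙ (log x) := measure_ge_le_exp_mul_mgf x hlog (hmgf _)
    _ ≤ exp (-log x * x) * exp (exp (log x) + mgf Z ℙ 240 * log x) := by
        gcongr; exact hψ _ hlog
    _ = exp (-x * log x + x + mgf Z ℙ 240 * log x) := by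
        rw [← exp_add, exp_log (by linarith)]; ring_nf

/-- Sharper right-tail upper bound (equation (ql)): there is `C > 0`
such that for all `x ≥ 2`, `P(Z ≥ x) ≤ exp(-x·ln x + x + C·ln x)`. -/
theorem quicksort_right_tail_upper_bound_sharp
    {Ω : Type*} [MeasureSpace Ω] [IsProbabilityMeasure (ℙ : Measure Ω)]
    (Z Z' Z'' U : Ω → ℝ) (g : ℝ → ℝ)
    (hg : ∀ u : ℝ, g u = 2 * u * Real.log u + 2 * (1 - u) * Real.log (1 - u) + 1)
    (hZm : Measurable Z) (hZ'm : Measurable Z') (hZ''m : Measurable Z'')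
    (hUm : Measurable U)
    (hZ' : IdentDistrib Z' Z ℙ ℙ) (hZ'' : IdentDistrib Z'' Z ℙ ℙ)
    (hU : Measure.map U ℙ = volume.restrict (Set.Icc (0 : ℝ) 1))
    (hindep : iIndepFun ![U, Z', Z''] ℙ)
    (hrec : IdentDistrib Z (fun ω => U ω * Z' ω + (1 - U ω) * Z'' ω + g (U ω)) ℙ ℙ)
    (hmean : ∫ ω, Z ω ∂ℙ = 0)
    (hmgf : ∀ t : ℝ, Integrable (fun ω => Real.exp (t * Z ω)) ℙ) :
    ∃ C > (0 : ℝ), ∀ x ≥ (2 : ℝ),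
      (ℙ {ω | x ≤ Z ω}).toReal
        ≤ Real.exp (-x * Real.log x + x + C * Real.log x) :=
  quicksort_right_tail_upper_bound_sharp_general Z Z' Z'' U g hg hZ' hZ'' hU hindep hrec hmgf
end

section
/- With κ := 2 − 1/ln 2, there exists a constant a ≥ 0 such that for all t > 0, ψ(−t) < exp(κ·t·ln t + a·t + 1), where ψ(t) := E[exp(t·Z)]. (Lemma on the moment generating function on the negative axis.) -/
/-!
Write `B(t) = κ t log t + a t + 1` with `κ = 2 - 1 / log 2`. The fixed-point equation gives
`ψ(t) = ∫₀¹ ψ(tu) ψ(t(1-u)) e^{t g(u)} du`, and `g = 1 - 2H` with `H` the binary entropy.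
If `ψ(-s) < e^{B(s)}` for all `s < T`, inserting this at `-T` gives
`ψ(-T) ≤ e^{B(T) + 1} ∫₀¹ e^{T (H(u) / log 2 - 1)} du`: the value of `κ` is exactly what makes the
`T log T` terms cancel. As `H < log 2` away from `u = 1/2`, the integral tends to `0` and is
below `e^{-1}` once `T ≥ t₁`, which closes the induction step. On `(0, t₁]` the bound holds for
large `a` by continuity of `ψ` and `ψ(0) = 1`, and a least counterexample (which exists again by
continuity) is ruled out by the step.
-/

open MeasureTheory ProbabilityTheory Real Filter Set Topology

theorem ProbabilityTheory.IndepFun.integral_comp_eq_integral_map_integral {Ω α β : Type*}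
    [MeasurableSpace Ω] [MeasurableSpace α] [MeasurableSpace β] {μ : Measure Ω} [IsFiniteMeasure μ]
    {X : Ω → α} {Y : Ω → β} (hXY : IndepFun X Y μ) (hX : AEMeasurable X μ)
    (hY : AEMeasurable Y μ) {f : α → β → ℝ} (hf : StronglyMeasurable (Function.uncurry f))
    (hint : Integrable (fun ω ↦ f (X ω) (Y ω)) μ) :
    ∫ ω, f (X ω) (Y ω) ∂μ = ∫ x, ∫ ω, f x (Y ω) ∂μ ∂(μ.map X) := by
  have hmap := (indepFun_iff_map_prod_eq_prod_map_map hX hY).1 hXY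
  have hXYm : AEMeasurable (fun ω ↦ (X ω, Y ω)) μ := hX.prodMk hY
  have hint' : Integrable (Function.uncurry f) ((μ.map X).prod (μ.map Y)) := by
    rwa [← hmap, integrable_map_measure hf.aestronglyMeasurable hXYm]
  calc ∫ ω, f (X ω) (Y ω) ∂μ
      = ∫ p, Function.uncurry f p ∂((μ.map X).prod (μ.map Y)) := by
        rw [← hmap, integral_map hXYm hf.aestronglyMeasurable]; rfl
    _ = ∫ x, ∫ y, f x y ∂(μ.map Y) ∂(μ.map X) := integral_prod _ hint'
    _ = ∫ x, ∫ ω, f x (Y ω) ∂μ ∂(μ.map X) := by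
        congr 1; funext x
        exact integral_map hY (hf.comp_measurable measurable_prodMk_left).aestronglyMeasurable

theorem mgf_eq_integral_map_mgf_mul_mgf {Ω : Type*} [MeasurableSpace Ω] {μ : Measure Ω}
    [IsProbabilityMeasure μ] {Z Z' Z'' U : Ω → ℝ} {g : ℝ → ℝ} (hg : Measurable g)
    (hU : AEMeasurable U μ) (hZ' : IdentDistrib Z' Z μ μ) (hZ'' : IdentDistrib Z'' Z μ μ)
    (hindep : iIndepFun ![U, Z', Z''] μ)
    (hrec : IdentDistrib Z (fun ω ↦ U ω * Z' ω + (1 - U ω) * Z'' ω + g (U ω)) μ μ)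
    (hmgf : ∀ t, Integrable (fun ω ↦ exp (t * Z ω)) μ) (t : ℝ) :
    mgf Z μ t = ∫ u, mgf Z μ (t * u) * mgf Z μ (t * (1 - u)) * exp (t * g u) ∂(μ.map U) := by
  have hmeas : ∀ i, AEMeasurable (![U, Z', Z''] i) μ := by
    intro i; fin_cases i
    exacts [hU, hZ'.aemeasurable_fst, hZ''.aemeasurable_fst]
  have hU_pair : IndepFun U (fun ω ↦ (Z' ω, Z'' ω)) μ :=
    (hindep.indepFun_prodMk₀ hmeas 1 2 0 (by decide) (by decide)).symm
  have hZ'Z'' : IndepFun Z' Z'' μ := hindep.indepFun (i := 1) (j := 2) (by decide)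
  have hexp : ∀ s : ℝ, Measurable fun x : ℝ ↦ exp (s * x) := fun s ↦ by fun_prop
  have hint := (hrec.comp (hexp t)).integrable_iff.1 (hmgf t)
  rw [mgf_congr_of_identDistrib Z _ hrec t, mgf]
  refine (hU_pair.integral_comp_eq_integral_map_integral hU (hZ'.aemeasurable_fst.prodMk
    hZ''.aemeasurable_fst) (f := fun u q ↦ exp (t * (u * q.1 + (1 - u) * q.2 + g u)))
    (by fun_prop) hint).trans (integral_congr_ae (ae_of_all _ fun u ↦ ?_))
  calc ∫ ω, exp (t * (u * Z' ω + (1 - u) * Z'' ω + g u)) ∂μ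
      = (∫ ω, exp (t * u * Z' ω) * exp (t * (1 - u) * Z'' ω) ∂μ) * exp (t * g u) := by
        rw [← integral_mul_const]; congr 1; funext ω
        rw [← exp_add, ← exp_add]; ring_nf
    _ = mgf Z μ (t * u) * mgf Z μ (t * (1 - u)) * exp (t * g u) := by
        rw [(hZ'Z''.exp_mul _ _).integral_fun_mul_eq_mul_integral
          ((hexp _).comp_aemeasurable hZ'.aemeasurable_fst).aestronglyMeasurable
          ((hexp _).comp_aemeasurable hZ''.aemeasurable_fst).aestronglyMeasurable,
          ← mgf, ← mgf, mgf_congr_identDistrib hZ', mgf_congr_identDistrib hZ'']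

theorem tendsto_integral_exp_mul_atTop {α : Type*} [MeasurableSpace α] {μ : Measure α}
    [IsFiniteMeasure μ] {f : α → ℝ} (hf : AEStronglyMeasurable f μ) (hneg : ∀ᵐ x ∂μ, f x < 0) :
    Tendsto (fun t ↦ ∫ x, exp (t * f x) ∂μ) atTop (𝓝 0) := by
  have hbound : ∀ᶠ t in atTop, ∀ᵐ x ∂μ, ‖exp (t * f x)‖ ≤ 1 :=
    (eventually_ge_atTop 0).mono fun t ht ↦ hneg.mono fun x hx ↦ by
      rw [norm_of_nonneg (exp_pos _).le, exp_le_one_iff]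
      exact mul_nonpos_of_nonneg_of_nonpos ht hx.le
  have hlim : ∀ᵐ x ∂μ, Tendsto (fun t ↦ exp (t * f x)) atTop (𝓝 0) :=
    hneg.mono fun x hx ↦ tendsto_exp_atBot.comp (tendsto_id.atTop_mul_const_of_neg hx)
  simpa using tendsto_integral_filter_of_dominated_convergence (fun _ ↦ 1)
    (Eventually.of_forall fun t ↦ continuous_exp.comp_aestronglyMeasurable (hf.const_mul t))
    hbound (integrable_const 1) hlim

theorem forall_pos_lt_of_forall_Ioo_lt {φ B : ℝ → ℝ} {t₁ : ℝ} (hφ : Continuous φ)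
    (hB : Continuous B) (ht₁ : 0 < t₁) (hbase : ∀ t ∈ Ioc 0 t₁, φ t < B t)
    (hstep : ∀ T > t₁, (∀ s ∈ Ioo 0 T, φ s < B s) → φ T < B T) :
    ∀ t > 0, φ t < B t := by
  by_contra! ⟨t, ht, hfail⟩
  set S := Ici t₁ ∩ {s | B s ≤ φ s}
  have hbdd : BddBelow S := ⟨t₁, fun s hs ↦ hs.1⟩
  have htS : t ∈ S := ⟨le_of_not_gt fun h ↦ (hbase t ⟨ht, h.le⟩).not_ge hfail, hfail⟩
  obtain ⟨hT₁, hTfail⟩ : sInf S ∈ S :=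
    (isClosed_Ici.inter (isClosed_le hB hφ)).csInf_mem ⟨t, htS⟩ hbdd
  have hlt : t₁ < sInf S := hT₁.lt_of_ne fun h ↦ (hbase t₁ ⟨ht₁, le_rfl⟩).not_ge (h ▸ hTfail)
  refine (hstep _ hlt fun s hs ↦ ?_).not_ge hTfail
  by_contra! hs'
  rcases le_or_gt s t₁ with h | h
  · exact (hbase s ⟨hs.1, h⟩).not_ge hs'
  · exact (csInf_le hbdd ⟨h.le, hs'⟩).not_gt hs.2

theorem exists_forall_lt_exp_add_mul {φ : ℝ → ℝ} {c T : ℝ} (hφ : Continuous φ)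
    (h0 : φ 0 < exp c) : ∃ a ≥ 0, ∀ t ∈ Icc 0 T, φ t < exp (c + a * t) := by
  obtain ⟨δ, hδ, hnear⟩ :=
    Metric.eventually_nhds_iff.1 ((hφ.tendsto 0).eventually (gt_mem_nhds h0))
  obtain ⟨M, hM⟩ := (isCompact_Icc (a := 0) (b := T)).bddAbove_image hφ.continuousOn
  set a := max 0 ((M - c) / δ)
  refine ⟨a, le_max_left _ _, fun t ht ↦ ?_⟩
  have ha : 0 ≤ a * t := mul_nonneg (le_max_left _ _) ht.1
  rcases lt_or_ge t δ with htδ | htδ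
  · exact (hnear (by rwa [dist_zero_right, norm_of_nonneg ht.1])).trans_le
      (exp_le_exp.2 (le_add_of_nonneg_right ha))
  · have hMc : M - c ≤ a * t :=
      calc M - c = (M - c) / δ * δ := (div_mul_cancel₀ _ hδ.ne').symm
        _ ≤ a * t := mul_le_mul (le_max_right _ _) htδ hδ.le (le_max_left _ _)
    calc φ t ≤ M := hM ⟨t, ht, rfl⟩
      _ ≤ c + a * t := by linarith
      _ < exp (c + a * t) := by linarith [add_one_le_exp (c + a * t)]

noncomputable def quicksortExponent (a t : ℝ) : ℝ := (2 - 1 / log 2) * t * log t + a * t + 1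

theorem continuous_quicksortExponent (a : ℝ) : Continuous (quicksortExponent a) := by
  have : Continuous fun t : ℝ ↦ t * log t := continuous_mul_log
  unfold quicksortExponent
  simp only [mul_assoc]
  fun_prop

theorem le_quicksortExponent (a : ℝ) {t : ℝ} (ht : 0 ≤ t) :
    1 / log 2 - 1 + a * t ≤ quicksortExponent a t := by
  have hκ : 0 ≤ 2 - 1 / log 2 := by
    rw [sub_nonneg, div_le_iff₀ (log_pos one_lt_two)]
    linarith [log_two_gt_d9]
  have := mul_le_mul_of_nonneg_left (self_sub_one_le_mul_log ht) hκ
  simp only [quicksortExponent]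
  linarith [mul_nonneg hκ ht]

theorem quicksortExponent_split (a : ℝ) {t u : ℝ} (ht : 0 < t) (hu : u ∈ Ioo 0 1) :
    quicksortExponent a (t * u) + quicksortExponent a (t * (1 - u)) + -t * (1 - 2 * binEntropy u)
      = quicksortExponent a t + 1 + t * (binEntropy u / log 2 - 1) := by
  have h1u : 0 < 1 - u := sub_pos.2 hu.2
  have hl2 : log 2 ≠ 0 := (log_pos one_lt_two).ne'
  simp only [quicksortExponent, binEntropy, log_inv, log_mul ht.ne' hu.1.ne',
    log_mul ht.ne' h1u.ne']
  field_simp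
  ring

theorem lt_exp_quicksortExponent_of_recursion {ψ : ℝ → ℝ} {a T : ℝ} (hT : 0 < T)
    (hψ : ∀ s, 0 ≤ ψ s)
    (hrec : ψ (-T) = ∫ u in Icc (0 : ℝ) 1,
      ψ (-T * u) * ψ (-T * (1 - u)) * exp (-T * (1 - 2 * binEntropy u)))
    (hdecay : ∫ u in Icc (0 : ℝ) 1, exp (T * (binEntropy u / log 2 - 1)) < exp (-1))
    (hbelow : ∀ s ∈ Ioo 0 T, ψ (-s) < exp (quicksortExponent a s)) :
    ψ (-T) < exp (quicksortExponent a T) := by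
  have hpoint : ∀ u ∈ Ioo (0 : ℝ) 1,
      ψ (-T * u) * ψ (-T * (1 - u)) * exp (-T * (1 - 2 * binEntropy u))
        ≤ exp (quicksortExponent a T + 1) * exp (T * (binEntropy u / log 2 - 1)) := by
    intro u hu
    have h1u : 0 < 1 - u := sub_pos.2 hu.2
    rw [← exp_add, ← quicksortExponent_split a hT hu, exp_add, exp_add, neg_mul, neg_mul]
    have hleft := hbelow (T * u) ⟨mul_pos hT hu.1, mul_lt_of_lt_one_right hT hu.2⟩
    have hright := hbelow (T * (1 - u))
      ⟨mul_pos hT h1u, mul_lt_of_lt_one_right hT (sub_lt_self 1 hu.1)⟩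
    exact mul_le_mul_of_nonneg_right (mul_le_mul hleft.le hright.le (hψ _) (exp_pos _).le)
      (exp_pos _).le
  have hint : Integrable (fun u ↦ exp (quicksortExponent a T + 1) *
      exp (T * (binEntropy u / log 2 - 1))) (volume.restrict (Ioo (0 : ℝ) 1)) :=
    (Continuous.integrableOn_Icc (by fun_prop)).mono_set Ioo_subset_Icc_self
  calc ψ (-T)
      ≤ ∫ u in Ioo (0 : ℝ) 1, exp (quicksortExponent a T + 1) *
          exp (T * (binEntropy u / log 2 - 1)) := by
        rw [hrec, integral_Icc_eq_integral_Ioo]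
        refine integral_mono_of_nonneg (ae_of_all _ fun u ↦ ?_) hint
          (ae_restrict_of_forall_mem measurableSet_Ioo hpoint)
        exact mul_nonneg (mul_nonneg (hψ _) (hψ _)) (exp_pos _).le
    _ < exp (quicksortExponent a T + 1) * exp (-1) := by
        rw [integral_const_mul, ← integral_Icc_eq_integral_Ioo]
        exact mul_lt_mul_of_pos_left hdecay (exp_pos _)
    _ = exp (quicksortExponent a T) := by rw [← exp_add, add_neg_cancel_right]

theorem quicksort_mgf_negative_axis_general
    {Ω : Type*} [MeasureSpace Ω] [IsProbabilityMeasure (ℙ : Measure Ω)]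
    (Z Z' Z'' U : Ω → ℝ) (g : ℝ → ℝ)
    (hg : ∀ u : ℝ, g u = 2 * u * Real.log u + 2 * (1 - u) * Real.log (1 - u) + 1)
    (hUm : Measurable U)
    (hZ' : IdentDistrib Z' Z ℙ ℙ) (hZ'' : IdentDistrib Z'' Z ℙ ℙ)
    (hU : Measure.map U ℙ = volume.restrict (Set.Icc (0 : ℝ) 1))
    (hindep : iIndepFun (m := fun _ : Fin 3 => Real.measurableSpace) ![U, Z', Z''] ℙ)
    (hrec : IdentDistrib Z (fun ω => U ω * Z' ω + (1 - U ω) * Z'' ω + g (U ω)) ℙ ℙ)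
    (hmgf : ∀ t : ℝ, Integrable (fun ω => Real.exp (t * Z ω)) ℙ) :
    ∃ a ≥ (0 : ℝ), ∀ t > (0 : ℝ),
      (∫ ω, Real.exp (-t * Z ω) ∂ℙ)
        < Real.exp ((2 - 1 / Real.log 2) * t * Real.log t + a * t + 1) := by
  obtain rfl : g = fun u ↦ 1 - 2 * binEntropy u :=
    funext fun u ↦ by rw [hg, binEntropy, log_inv, log_inv]; ring
  have hψ : Continuous fun t ↦ mgf Z ℙ (-t) := (continuous_mgf hmgf).comp continuous_neg
  have hfixed (t : ℝ) := hU ▸ mgf_eq_integral_map_mgf_mul_mgf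
    (by fun_prop : Measurable fun u ↦ 1 - 2 * binEntropy u) hUm.aemeasurable
    hZ' hZ'' hindep hrec hmgf t
  have hdeficit : ∀ᵐ u ∂volume.restrict (Icc (0 : ℝ) 1), binEntropy u / log 2 - 1 < 0 :=
    (ae_restrict_of_ae (volume.ae_ne 2⁻¹)).mono fun u hu ↦ by
      rw [sub_neg, div_lt_one (log_pos one_lt_two)]
      exact binEntropy_lt_log_two.2 hu
  obtain ⟨t₁, ht₁⟩ := eventually_atTop.1 (((tendsto_integral_exp_mul_atTop
    (by fun_prop) hdeficit).eventually (gt_mem_nhds (exp_pos (-1)))).and (eventually_gt_atTop 0))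
  obtain ⟨a, ha, hsmall⟩ := exists_forall_lt_exp_add_mul (c := 1 / log 2 - 1) (T := t₁) hψ (by
    rw [neg_zero, mgf_zero, one_lt_exp_iff, sub_pos, lt_div_iff₀ (log_pos one_lt_two)]
    linarith [log_two_lt_d9])
  refine ⟨a, ha, forall_pos_lt_of_forall_Ioo_lt hψ (continuous_quicksortExponent a).rexp
    (ht₁ t₁ le_rfl).2 (fun t ht ↦ ?_) fun T hT hbelow ↦ ?_⟩
  · exact (hsmall t (Ioc_subset_Icc_self ht)).trans_le
      (exp_le_exp.2 (le_quicksortExponent a ht.1.le))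
  · exact lt_exp_quicksortExponent_of_recursion (ψ := mgf Z ℙ) (hT.trans' (ht₁ t₁ le_rfl).2)
      (fun _ ↦ mgf_nonneg) (hfixed (-T)) (ht₁ T hT.le).1 hbelow

/-- Lemma on the MGF on the negative axis: with `κ := 2 - 1/ln 2`,
there is `a ≥ 0` such that for all `t > 0`, `ψ(-t) < exp(κ·t·ln t + a·t + 1)`. -/
theorem quicksort_mgf_negative_axis
    {Ω : Type*} [MeasureSpace Ω] [IsProbabilityMeasure (ℙ : Measure Ω)]
    (Z Z' Z'' U : Ω → ℝ) (g : ℝ → ℝ)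
    (hg : ∀ u : ℝ, g u = 2 * u * Real.log u + 2 * (1 - u) * Real.log (1 - u) + 1)
    (hZm : Measurable Z) (hZ'm : Measurable Z') (hZ''m : Measurable Z'')
    (hUm : Measurable U)
    (hZ' : IdentDistrib Z' Z ℙ ℙ) (hZ'' : IdentDistrib Z'' Z ℙ ℙ)
    (hU : Measure.map U ℙ = volume.restrict (Set.Icc (0 : ℝ) 1))
    (hindep : iIndepFun (m := fun _ : Fin 3 => Real.measurableSpace) ![U, Z', Z''] ℙ)
    (hrec : IdentDistrib Z (fun ω => U ω * Z' ω + (1 - U ω) * Z'' ω + g (U ω)) ℙ ℙ)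
    (hmean : ∫ ω, Z ω ∂ℙ = 0)
    (hmgf : ∀ t : ℝ, Integrable (fun ω => Real.exp (t * Z ω)) ℙ) :
    ∃ a ≥ (0 : ℝ), ∀ t > (0 : ℝ),
      (∫ ω, Real.exp (-t * Z ω) ∂ℙ)
        < Real.exp ((2 - 1 / Real.log 2) * t * Real.log t + a * t + 1) :=
  quicksort_mgf_negative_axis_general Z Z' Z'' U g hg hUm hZ' hZ'' hU hindep hrec hmgf
end

section
/- The moment generating function ψ(t) := E[exp(t·Z)] satisfies the functional equation ψ(t) = ∫₀¹ ψ(u·t)·ψ((1−u)·t)·exp(t·g(u)) du for every real t. -/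
open MeasureTheory ProbabilityTheory Real

/-!
Conditioning on `U`, which is independent of `(Z', Z'')`, turns `E[exp(t Z)]` into the average
over `u ∈ [0,1]` of `E[exp(t (u Z' + (1 - u) Z'' + g u))]`. For fixed `u` the independence of
`Z'` and `Z''` factors this expectation as `ψ(u t) ψ((1 - u) t) exp(t g u)`, since `Z'` and `Z''`
are distributed as `Z`.
-/

namespace ProbabilityTheory

variable {Ω α β E : Type*} [MeasurableSpace Ω] [MeasurableSpace α] [MeasurableSpace β]
  [NormedAddCommGroup E] [NormedSpace ℝ E] {μ : Measure Ω}

theorem IndepFun.integral_comp_prodMk_eq_integral_integral [IsFiniteMeasure μ]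
    {U : Ω → α} {W : Ω → β} (hUW : IndepFun U W μ) (hU : AEMeasurable U μ)
    (hW : AEMeasurable W μ) {F : α × β → E} (hF : StronglyMeasurable F)
    (hint : Integrable (fun ω ↦ F (U ω, W ω)) μ) :
    ∫ ω, F (U ω, W ω) ∂μ = ∫ u, ∫ ω, F (u, W ω) ∂μ ∂μ.map U := by
  have hUWm : AEMeasurable (fun ω ↦ (U ω, W ω)) μ := hU.prodMk hW
  have hlaw := (indepFun_iff_map_prod_eq_prod_map_map hU hW).mp hUW
  have hintF : Integrable F ((μ.map U).prod (μ.map W)) := by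
    rw [← hlaw]
    exact (integrable_map_measure hF.aestronglyMeasurable hUWm).mpr hint
  rw [← integral_map hUWm hF.aestronglyMeasurable, hlaw, integral_prod F hintF]
  congr 1 with u
  exact integral_map hW (hF.comp_measurable measurable_prodMk_left).aestronglyMeasurable

theorem IndepFun.mgf_const_mul_add_const_mul {X Y : Ω → ℝ} (hXY : IndepFun X Y μ)
    (hX : AEMeasurable X μ) (hY : AEMeasurable Y μ) (a b t : ℝ) :
    mgf (fun ω ↦ a * X ω + b * Y ω) μ t = mgf X μ (a * t) * mgf Y μ (b * t) := by
  have hindep : IndepFun (fun ω ↦ a * X ω) (fun ω ↦ b * Y ω) μ :=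
    hXY.comp (measurable_const_mul a) (measurable_const_mul b)
  rw [← mgf_const_mul, ← mgf_const_mul]
  exact hindep.mgf_add' (hX.const_mul a).aestronglyMeasurable (hY.const_mul b).aestronglyMeasurable

end ProbabilityTheory

theorem quicksort_mgf_functional_equation_general
    {Ω : Type*} [MeasureSpace Ω] [IsProbabilityMeasure (ℙ : Measure Ω)]
    (Z Z' Z'' U : Ω → ℝ) (g : ℝ → ℝ)
    (hg : ∀ u : ℝ, g u = 2 * u * Real.log u + 2 * (1 - u) * Real.log (1 - u) + 1)
    (hZ'm : Measurable Z') (hZ''m : Measurable Z'')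
    (hUm : Measurable U)
    (hZ' : IdentDistrib Z' Z ℙ ℙ) (hZ'' : IdentDistrib Z'' Z ℙ ℙ)
    (hU : Measure.map U ℙ = volume.restrict (Set.Icc (0 : ℝ) 1))
    (hindep : iIndepFun (m := fun _ : Fin 3 => Real.measurableSpace) ![U, Z', Z''] ℙ)
    (hrec : IdentDistrib Z (fun ω => U ω * Z' ω + (1 - U ω) * Z'' ω + g (U ω)) ℙ ℙ)
    (hmgf : ∀ t : ℝ, Integrable (fun ω => Real.exp (t * Z ω)) ℙ) :
    ∀ t : ℝ,
      (∫ ω, Real.exp (t * Z ω) ∂ℙ)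
        = ∫ u in (0 : ℝ)..1,
            (∫ ω, Real.exp (u * t * Z ω) ∂ℙ) * (∫ ω, Real.exp ((1 - u) * t * Z ω) ∂ℙ)
              * Real.exp (t * g u) := by
  intro t
  have hgm : Measurable g := by rw [funext hg]; fun_prop
  have hmeas : ∀ i, Measurable (![U, Z', Z''] i) := by
    intro i; fin_cases i <;> assumption
  have hZZ : IndepFun Z' Z'' ℙ := by simpa using hindep.indepFun (i := 1) (j := 2) (by decide)
  have hUW : IndepFun U (fun ω ↦ (Z' ω, Z'' ω)) ℙ := by
    simpa using (hindep.indepFun_prodMk hmeas 1 2 0 (by decide) (by decide)).symm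
  let F : ℝ × ℝ × ℝ → ℝ := fun p ↦ exp (t * (p.1 * p.2.1 + (1 - p.1) * p.2.2 + g p.1))
  have hexp := hrec.comp (u := fun x ↦ exp (t * x)) (by fun_prop)
  have hfactor (u : ℝ) : ∫ ω, F (u, Z' ω, Z'' ω) ∂ℙ
      = mgf Z ℙ (u * t) * mgf Z ℙ ((1 - u) * t) * exp (t * g u) := calc
    _ = mgf (fun ω ↦ u * Z' ω + (1 - u) * Z'' ω) ℙ t * exp (t * g u) := by
      rw [← mgf_add_const]; rfl
    _ = mgf Z' ℙ (u * t) * mgf Z'' ℙ ((1 - u) * t) * exp (t * g u) := by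
      rw [hZZ.mgf_const_mul_add_const_mul hZ'm.aemeasurable hZ''m.aemeasurable]
    _ = _ := by rw [mgf_congr_identDistrib hZ', mgf_congr_identDistrib hZ'']
  calc ∫ ω, exp (t * Z ω) ∂ℙ = ∫ ω, F (U ω, Z' ω, Z'' ω) ∂ℙ := hexp.integral_eq
    _ = ∫ u, ∫ ω, F (u, Z' ω, Z'' ω) ∂ℙ ∂Measure.map U ℙ :=
      hUW.integral_comp_prodMk_eq_integral_integral hUm.aemeasurable
        (hZ'm.prodMk hZ''m).aemeasurable (by fun_prop) (hexp.integrable_iff.mp (hmgf t))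
    _ = ∫ u in Set.Icc 0 1, mgf Z ℙ (u * t) * mgf Z ℙ ((1 - u) * t) * exp (t * g u) := by
      simp only [hfactor, hU]
    _ = _ := by
      rw [intervalIntegral.integral_of_le zero_le_one, integral_Icc_eq_integral_Ioc]; rfl

/-- The MGF `ψ(t) := E[exp(t·Z)]` satisfies
`ψ(t) = ∫₀¹ ψ(u·t)·ψ((1-u)·t)·exp(t·g(u)) du` for every real `t`. -/
theorem quicksort_mgf_functional_equation
    {Ω : Type*} [MeasureSpace Ω] [IsProbabilityMeasure (ℙ : Measure Ω)]
    (Z Z' Z'' U : Ω → ℝ) (g : ℝ → ℝ)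
    (hg : ∀ u : ℝ, g u = 2 * u * Real.log u + 2 * (1 - u) * Real.log (1 - u) + 1)
    (hZm : Measurable Z) (hZ'm : Measurable Z') (hZ''m : Measurable Z'')
    (hUm : Measurable U)
    (hZ' : IdentDistrib Z' Z ℙ ℙ) (hZ'' : IdentDistrib Z'' Z ℙ ℙ)
    (hU : Measure.map U ℙ = volume.restrict (Set.Icc (0 : ℝ) 1))
    (hindep : iIndepFun (m := fun _ : Fin 3 => Real.measurableSpace) ![U, Z', Z''] ℙ)
    (hrec : IdentDistrib Z (fun ω => U ω * Z' ω + (1 - U ω) * Z'' ω + g (U ω)) ℙ ℙ)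
    (hmean : ∫ ω, Z ω ∂ℙ = 0)
    (hmgf : ∀ t : ℝ, Integrable (fun ω => Real.exp (t * Z ω)) ℙ) :
    ∀ t : ℝ,
      (∫ ω, Real.exp (t * Z ω) ∂ℙ)
        = ∫ u in (0 : ℝ)..1,
            (∫ ω, Real.exp (u * t * Z ω) ∂ℙ) * (∫ ω, Real.exp ((1 - u) * t * Z ω) ∂ℙ)
              * Real.exp (t * g u) :=
  quicksort_mgf_functional_equation_general Z Z' Z'' U g hg hZ'm hZ''m hUm hZ' hZ'' hU hindep hrec
    hmgf
end

section
/- Let ε > 0 be such that g(1/2 + ε) < 0, and set a := −g(1/2 + ε) > 0. Then for every real z, P(Z ≤ −z − a) ≥ 2ε · P(Z ≤ −z)². (Recursive inequality for the left tail.) -/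
open MeasureTheory ProbabilityTheory Real Set

lemma quicksortToll_one_sub (u : ℝ) : quicksortToll (1 - u) = quicksortToll u := by
  simp only [quicksortToll, sub_sub_cancel]
  ring

lemma convexOn_quicksortToll : ConvexOn ℝ (Icc 0 1) quicksortToll := by
  refine ⟨convex_Icc 0 1, fun x hx y hy a b ha hb hab => ?_⟩
  have h := convexOn_mul_log.2 (mem_Ici.2 hx.1) (mem_Ici.2 hy.1) ha hb hab
  have h' := convexOn_mul_log.2 (mem_Ici.2 (sub_nonneg.2 hx.2)) (mem_Ici.2 (sub_nonneg.2 hy.2))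
    ha hb hab
  have hcompl : 1 - (a * x + b * y) = a * (1 - x) + b * (1 - y) := by
    linear_combination -hab
  simp only [quicksortToll, smul_eq_mul] at h h' ⊢
  rw [hcompl]
  linarith

lemma quicksortToll_le_of_mem_Icc {δ u : ℝ} (hδ : δ ≤ 1 / 2)
    (hu : u ∈ Icc (1 / 2 - δ) (1 / 2 + δ)) : quicksortToll u ≤ quicksortToll (1 / 2 + δ) := by
  have hδ₀ : 0 ≤ δ := by linarith [hu.1.trans hu.2]
  have hleft : 1 / 2 - δ = 1 - (1 / 2 + δ) := by ring
  calc quicksortToll u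
      ≤ max (quicksortToll (1 / 2 - δ)) (quicksortToll (1 / 2 + δ)) :=
        convexOn_quicksortToll.le_on_segment ⟨by linarith, by linarith⟩ ⟨by linarith, by linarith⟩
          (by rwa [segment_eq_Icc (by linarith)])
    _ = quicksortToll (1 / 2 + δ) := by rw [hleft, quicksortToll_one_sub, max_self]

lemma one_le_quicksortToll_of_one_le {v : ℝ} (hv : 1 ≤ v) : 1 ≤ quicksortToll v := by
  have hlog : log (1 - v) = log (v - 1) := by rw [← neg_sub, log_neg_eq_log]
  have hmul_log : (v - 1) * log (v - 1) ≤ v * log v := by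
    rcases hv.eq_or_lt with rfl | hv
    · simp
    calc (v - 1) * log (v - 1) ≤ (v - 1) * log v := by gcongr; linarith
      _ ≤ v * log v := by gcongr; exacts [log_nonneg hv.le, by linarith]
  simp only [quicksortToll, hlog]
  linarith

lemma measure_preimage_Icc_of_map_eq_uniform {Ω : Type*} [MeasurableSpace Ω] {μ : Measure Ω}
    {U : Ω → ℝ} (hU : μ.map U = volume.restrict (Icc 0 1)) {a b : ℝ} (ha : 0 ≤ a) (hb : b ≤ 1) :
    μ (U ⁻¹' Icc a b) = ENNReal.ofReal (b - a) := by
  have hUm : AEMeasurable U μ := .of_map_ne_zero (by simp [hU])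
  rw [← Measure.map_apply_of_aemeasurable hUm measurableSet_Icc, hU,
    Measure.restrict_apply measurableSet_Icc, inter_eq_left.2 (Icc_subset_Icc ha hb), volume_Icc]

lemma ProbabilityTheory.iIndepFun.measure_inter_preimage_eq_mul_three {Ω β : Type*}
    [MeasurableSpace Ω] [MeasurableSpace β] {μ : Measure Ω} {X Y W : Ω → β}
    (h : iIndepFun ![X, Y, W] μ) {A B C : Set β} (hA : MeasurableSet A) (hB : MeasurableSet B)
    (hC : MeasurableSet C) :
    μ (X ⁻¹' A ∩ Y ⁻¹' B ∩ W ⁻¹' C) = μ (X ⁻¹' A) * μ (Y ⁻¹' B) * μ (W ⁻¹' C) := by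
  have hprod := h.measure_inter_preimage_eq_mul Finset.univ (sets := ![A, B, C])
    (fun i _ => by fin_cases i <;> assumption)
  rw [Fin.prod_univ_three] at hprod
  calc μ (X ⁻¹' A ∩ Y ⁻¹' B ∩ W ⁻¹' C)
        = μ (⋂ i ∈ Finset.univ, ![X, Y, W] i ⁻¹' ![A, B, C] i) := by
        congr 1
        ext ω
        simp [Fin.forall_fin_succ, and_assoc]
    _ = _ := hprod

lemma measure_tail_le_of_recursion {Ω : Type*} [MeasurableSpace Ω] {μ : Measure Ω}
    {Z Z' Z'' U : Ω → ℝ} {g : ℝ → ℝ} (hZ' : IdentDistrib Z' Z μ μ)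
    (hZ'' : IdentDistrib Z'' Z μ μ) (hindep : iIndepFun ![U, Z', Z''] μ)
    (hrec : IdentDistrib Z (fun ω => U ω * Z' ω + (1 - U ω) * Z'' ω + g (U ω)) μ μ)
    {S : Set ℝ} (hS : MeasurableSet S) {a : ℝ} (hgS : ∀ u ∈ S, u ∈ Icc 0 1 ∧ g u ≤ -a) (z : ℝ) :
    μ (U ⁻¹' S) * μ {ω | Z ω ≤ z} ^ 2 ≤ μ {ω | Z ω ≤ z - a} := by
  have hsub : U ⁻¹' S ∩ Z' ⁻¹' Iic z ∩ Z'' ⁻¹' Iic z ⊆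
      (fun ω => U ω * Z' ω + (1 - U ω) * Z'' ω + g (U ω)) ⁻¹' Iic (z - a) := by
    rintro ω ⟨⟨hU, hZ'ω⟩, hZ''ω⟩
    obtain ⟨⟨hU₀, hU₁⟩, hg⟩ := hgS (U ω) hU
    have hUZ' : U ω * Z' ω ≤ U ω * z := mul_le_mul_of_nonneg_left hZ'ω hU₀
    have hUZ'' : (1 - U ω) * Z'' ω ≤ (1 - U ω) * z :=
      mul_le_mul_of_nonneg_left hZ''ω (sub_nonneg.2 hU₁)
    simp only [mem_preimage, mem_Iic]
    linarith
  calc μ (U ⁻¹' S) * μ {ω | Z ω ≤ z} ^ 2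
      = μ (U ⁻¹' S) * μ (Z' ⁻¹' Iic z) * μ (Z'' ⁻¹' Iic z) := by
        rw [hZ'.measure_mem_eq measurableSet_Iic, hZ''.measure_mem_eq measurableSet_Iic, sq,
          mul_assoc]
        rfl
    _ = μ (U ⁻¹' S ∩ Z' ⁻¹' Iic z ∩ Z'' ⁻¹' Iic z) :=
        (hindep.measure_inter_preimage_eq_mul_three hS measurableSet_Iic measurableSet_Iic).symm
    _ ≤ μ (Z ⁻¹' Iic (z - a)) :=
        (measure_mono hsub).trans_eq (hrec.measure_mem_eq measurableSet_Iic).symm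

theorem quicksort_left_tail_recursive_inequality_general
    {Ω : Type*} [MeasureSpace Ω] [IsProbabilityMeasure (ℙ : Measure Ω)]
    (Z Z' Z'' U : Ω → ℝ) (g : ℝ → ℝ)
    (hg : ∀ u : ℝ, g u = 2 * u * Real.log u + 2 * (1 - u) * Real.log (1 - u) + 1)
    (hZ' : IdentDistrib Z' Z ℙ ℙ) (hZ'' : IdentDistrib Z'' Z ℙ ℙ)
    (hU : Measure.map U ℙ = volume.restrict (Set.Icc (0 : ℝ) 1))
    (hindep : iIndepFun ![U, Z', Z''] ℙ)
    (hrec : IdentDistrib Z (fun ω => U ω * Z' ω + (1 - U ω) * Z'' ω + g (U ω)) ℙ ℙ)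
    (ε a : ℝ) (hε : 0 < ε) (hgε : g (1 / 2 + ε) < 0) (ha : a = -g (1 / 2 + ε)) :
    ∀ z : ℝ,
      2 * ε * (ℙ {ω | Z ω ≤ -z}).toReal ^ 2 ≤ (ℙ {ω | Z ω ≤ -z - a}).toReal := by
  obtain rfl : g = quicksortToll := funext hg
  intro z
  have hε_half : ε ≤ 1 / 2 := by
    by_contra! h
    linarith [one_le_quicksortToll_of_one_le (v := 1 / 2 + ε) (by linarith)]
  have hPU : ℙ (U ⁻¹' Icc (1 / 2 - ε) (1 / 2 + ε)) = ENNReal.ofReal (2 * ε) := by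
    rw [measure_preimage_Icc_of_map_eq_uniform hU (by linarith) (by linarith)]
    ring_nf
  have htoll : ∀ u ∈ Icc (1 / 2 - ε) (1 / 2 + ε), u ∈ Icc 0 1 ∧ quicksortToll u ≤ -a :=
    fun u hu => ⟨⟨by linarith [hu.1], by linarith [hu.2]⟩,
      by rw [ha, neg_neg]; exact quicksortToll_le_of_mem_Icc hε_half hu⟩
  have htail := measure_tail_le_of_recursion hZ' hZ'' hindep hrec measurableSet_Icc htoll (-z)
  rw [hPU] at htail
  have hreal := ENNReal.toReal_mono (measure_ne_top _ _) htail
  rwa [ENNReal.toReal_mul, ENNReal.toReal_pow, ENNReal.toReal_ofReal (by positivity)] at hreal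

/-- Recursive inequality for the left tail: if `ε > 0`,
`g(1/2 + ε) < 0` and `a := -g(1/2 + ε)`, then for every real `z`,
`P(Z ≤ -z - a) ≥ 2ε · P(Z ≤ -z)²`. -/
theorem quicksort_left_tail_recursive_inequality
    {Ω : Type*} [MeasureSpace Ω] [IsProbabilityMeasure (ℙ : Measure Ω)]
    (Z Z' Z'' U : Ω → ℝ) (g : ℝ → ℝ)
    (hg : ∀ u : ℝ, g u = 2 * u * Real.log u + 2 * (1 - u) * Real.log (1 - u) + 1)
    (hZm : Measurable Z) (hZ'm : Measurable Z') (hZ''m : Measurable Z'')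
    (hUm : Measurable U)
    (hZ' : IdentDistrib Z' Z ℙ ℙ) (hZ'' : IdentDistrib Z'' Z ℙ ℙ)
    (hU : Measure.map U ℙ = volume.restrict (Set.Icc (0 : ℝ) 1))
    (hindep : iIndepFun ![U, Z', Z''] ℙ)
    (hrec : IdentDistrib Z (fun ω => U ω * Z' ω + (1 - U ω) * Z'' ω + g (U ω)) ℙ ℙ)
    (hmean : ∫ ω, Z ω ∂ℙ = 0)
    (hmgf : ∀ t : ℝ, Integrable (fun ω => Real.exp (t * Z ω)) ℙ)
    (ε a : ℝ) (hε : 0 < ε) (hgε : g (1 / 2 + ε) < 0) (ha : a = -g (1 / 2 + ε)) :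
    ∀ z : ℝ,
      2 * ε * (ℙ {ω | Z ω ≤ -z}).toReal ^ 2 ≤ (ℙ {ω | Z ω ≤ -z - a}).toReal :=
  quicksort_left_tail_recursive_inequality_general Z Z' Z'' U g hg hZ' hZ'' hU hindep hrec ε a hε
    hgε ha
end

section
/- Let ε > 0 be such that g(1/2 + ε) < 0 and 2ε ≤ 1, and set a := −g(1/2 + ε) > 0. Then for every natural number n ≥ 0, P(Z ≤ −n·a) ≥ (2ε)^(2ⁿ − 1) · P(Z ≤ 0)^(2ⁿ). (Iterated left-tail lower bound.) -/
/-!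
Writing `g = 1 - 2 h` with `h` the binary entropy, concavity and symmetry of `h` give
`g ≤ g (1/2 + ε) = -a` whenever `U ∈ [1/2 - ε, 1/2 + ε]`, an event of probability `2ε`.
On that event, together with the independent events `Z' ≤ c` and `Z'' ≤ c`, the recursion puts
`Z` at most `c - a`, so `P(Z ≤ c - a) ≥ 2ε · P(Z ≤ c)²`; iterating this from `c = 0` squares the
bound at every step.
-/

open MeasureTheory ProbabilityTheory Real Set

lemma binEntropy_half_add_le_binEntropy {ε u : ℝ} (hε : 2 * ε ≤ 1)
    (hu : u ∈ Icc (1 / 2 - ε) (1 / 2 + ε)) : binEntropy (1 / 2 + ε) ≤ binEntropy u := by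
  have hε0 : 0 ≤ ε := by linarith [hu.1.trans hu.2]
  have hmin := strictConcave_binEntropy.concaveOn.ge_on_segment
    (x := 1 / 2 - ε) (y := 1 / 2 + ε) ⟨by linarith, by linarith⟩ ⟨by linarith, by linarith⟩
    (by rwa [segment_eq_Icc (by linarith)])
  have hsymm : binEntropy (1 / 2 - ε) = binEntropy (1 / 2 + ε) := by
    rw [← binEntropy_one_sub]; congr 1; ring
  rwa [hsymm, min_self] at hmin

lemma measure_le_of_iIndepFun_of_identDistrib_recursion {Ω : Type*} [MeasurableSpace Ω]
    {μ : Measure Ω} {Z Z' Z'' U : Ω → ℝ} {g : ℝ → ℝ}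
    (hZ' : IdentDistrib Z' Z μ μ) (hZ'' : IdentDistrib Z'' Z μ μ)
    (hindep : iIndepFun ![U, Z', Z''] μ)
    (hrec : IdentDistrib Z (fun ω => U ω * Z' ω + (1 - U ω) * Z'' ω + g (U ω)) μ μ)
    {s : Set ℝ} (hs : MeasurableSet s) (hs01 : s ⊆ Icc 0 1) {a : ℝ}
    (hgs : ∀ u ∈ s, g u ≤ -a) (c : ℝ) :
    μ (U ⁻¹' s) * μ {ω | Z ω ≤ c} ^ 2 ≤ μ {ω | Z ω ≤ c - a} := by
  set E : Fin 3 → Set ℝ := ![s, Iic c, Iic c]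
  have hE : ∀ i, MeasurableSet[MeasurableSpace.comap (![U, Z', Z''] i) inferInstance]
      (![U, Z', Z''] i ⁻¹' E i) := fun i => ⟨E i, by fin_cases i <;> simp [E, hs], rfl⟩
  have hsub : ⋂ i, ![U, Z', Z''] i ⁻¹' E i ⊆
      {ω | U ω * Z' ω + (1 - U ω) * Z'' ω + g (U ω) ≤ c - a} := by
    intro ω hω
    have hu : U ω ∈ s := mem_iInter.1 hω 0
    have h' : Z' ω ≤ c := mem_iInter.1 hω 1
    have h'' : Z'' ω ≤ c := mem_iInter.1 hω 2
    have hu01 := hs01 hu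
    have := mul_le_mul_of_nonneg_left h' hu01.1
    have := mul_le_mul_of_nonneg_left h'' (sub_nonneg.2 hu01.2)
    show U ω * Z' ω + (1 - U ω) * Z'' ω + g (U ω) ≤ c - a
    linarith [hgs _ hu]
  calc μ (U ⁻¹' s) * μ {ω | Z ω ≤ c} ^ 2
      = μ (U ⁻¹' s) * μ (Z' ⁻¹' Iic c) * μ (Z'' ⁻¹' Iic c) := by
        rw [hZ'.measure_mem_eq measurableSet_Iic, hZ''.measure_mem_eq measurableSet_Iic, sq,
          mul_assoc]; rfl
    _ = μ (⋂ i, ![U, Z', Z''] i ⁻¹' E i) := by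
        rw [hindep.meas_iInter hE, Fin.prod_univ_three]; rfl
    _ ≤ μ {ω | U ω * Z' ω + (1 - U ω) * Z'' ω + g (U ω) ≤ c - a} := measure_mono hsub
    _ = μ {ω | Z ω ≤ c - a} := (hrec.measure_mem_eq measurableSet_Iic).symm

lemma pow_two_pow_sub_one_mul_pow_two_pow_le {b : ℝ} {p : ℕ → ℝ} (hb : 0 ≤ b) (hp : 0 ≤ p 0)
    (hstep : ∀ n, b * p n ^ 2 ≤ p (n + 1)) (n : ℕ) : b ^ (2 ^ n - 1) * p 0 ^ 2 ^ n ≤ p n := by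
  induction n with
  | zero => simp
  | succ n ih =>
    have hexp : 2 ^ (n + 1) - 1 = (2 ^ n - 1) * 2 + 1 := by
      have := Nat.one_le_two_pow (n := n); rw [pow_succ]; omega
    calc b ^ (2 ^ (n + 1) - 1) * p 0 ^ 2 ^ (n + 1)
        = b * (b ^ (2 ^ n - 1) * p 0 ^ 2 ^ n) ^ 2 := by
          rw [hexp, pow_succ 2 n, pow_succ, pow_mul, pow_mul]; ring
      _ ≤ b * p n ^ 2 := by gcongr
      _ ≤ p (n + 1) := hstep n

theorem quicksort_left_tail_iterated_lower_bound_general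
    {Ω : Type*} [MeasureSpace Ω] [IsProbabilityMeasure (ℙ : Measure Ω)]
    (Z Z' Z'' U : Ω → ℝ) (g : ℝ → ℝ)
    (hg : ∀ u : ℝ, g u = 2 * u * Real.log u + 2 * (1 - u) * Real.log (1 - u) + 1)
    (hUm : Measurable U)
    (hZ' : IdentDistrib Z' Z ℙ ℙ) (hZ'' : IdentDistrib Z'' Z ℙ ℙ)
    (hU : Measure.map U ℙ = volume.restrict (Set.Icc (0 : ℝ) 1))
    (hindep : iIndepFun ![U, Z', Z''] ℙ)
    (hrec : IdentDistrib Z (fun ω => U ω * Z' ω + (1 - U ω) * Z'' ω + g (U ω)) ℙ ℙ)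
    (ε a : ℝ) (hε : 0 < ε) (hε2 : 2 * ε ≤ 1)
    (ha : a = -g (1 / 2 + ε)) :
    ∀ n : ℕ,
      (2 * ε) ^ (2 ^ n - 1) * (ℙ {ω | Z ω ≤ 0}).toReal ^ (2 ^ n)
        ≤ (ℙ {ω | Z ω ≤ -(n * a)}).toReal := by
  set s := Icc (1 / 2 - ε) (1 / 2 + ε)
  have hs01 : s ⊆ Icc 0 1 := Icc_subset_Icc (by linarith) (by linarith)
  have hg_entropy : ∀ u, g u = 1 - 2 * binEntropy u := fun u => by
    rw [hg, binEntropy, log_inv, log_inv]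
    ring
  have hgs : ∀ u ∈ s, g u ≤ -a := fun u hu => by
    rw [ha, neg_neg, hg_entropy, hg_entropy]
    linarith [binEntropy_half_add_le_binEntropy hε2 hu]
  have hUs : ℙ (U ⁻¹' s) = ENNReal.ofReal (2 * ε) := by
    rw [← Measure.map_apply hUm measurableSet_Icc, hU, Measure.restrict_apply measurableSet_Icc,
      inter_eq_self_of_subset_left hs01, Real.volume_Icc]
    congr 1; ring
  have hstep : ∀ c : ℝ, 2 * ε * (ℙ {ω | Z ω ≤ c}).toReal ^ 2 ≤ (ℙ {ω | Z ω ≤ c - a}).toReal :=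
    fun c => by
      have := measure_le_of_iIndepFun_of_identDistrib_recursion hZ' hZ'' hindep hrec
        measurableSet_Icc hs01 hgs c
      rw [hUs] at this
      simpa [ENNReal.toReal_mul, ENNReal.toReal_pow, hε.le] using
        ENNReal.toReal_mono (measure_ne_top _ _) this
  intro n
  convert pow_two_pow_sub_one_mul_pow_two_pow_le (b := 2 * ε)
    (p := fun n : ℕ => (ℙ {ω | Z ω ≤ -(n * a)}).toReal) (by positivity) ENNReal.toReal_nonneg
    (fun k => ?_) n using 4
  · simp
  convert hstep (-(k * a)) using 6
  push_cast
  ring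

/-- Iterated left-tail lower bound: if `ε > 0`, `g(1/2 + ε) < 0`,
`2ε ≤ 1` and `a := -g(1/2 + ε)`, then for every `n : ℕ`,
`P(Z ≤ -n·a) ≥ (2ε)^(2^n - 1) · P(Z ≤ 0)^(2^n)`. -/
theorem quicksort_left_tail_iterated_lower_bound
    {Ω : Type*} [MeasureSpace Ω] [IsProbabilityMeasure (ℙ : Measure Ω)]
    (Z Z' Z'' U : Ω → ℝ) (g : ℝ → ℝ)
    (hg : ∀ u : ℝ, g u = 2 * u * Real.log u + 2 * (1 - u) * Real.log (1 - u) + 1)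
    (hZm : Measurable Z) (hZ'm : Measurable Z') (hZ''m : Measurable Z'')
    (hUm : Measurable U)
    (hZ' : IdentDistrib Z' Z ℙ ℙ) (hZ'' : IdentDistrib Z'' Z ℙ ℙ)
    (hU : Measure.map U ℙ = volume.restrict (Set.Icc (0 : ℝ) 1))
    (hindep : iIndepFun ![U, Z', Z''] ℙ)
    (hrec : IdentDistrib Z (fun ω => U ω * Z' ω + (1 - U ω) * Z'' ω + g (U ω)) ℙ ℙ)
    (hmean : ∫ ω, Z ω ∂ℙ = 0)
    (hmgf : ∀ t : ℝ, Integrable (fun ω => Real.exp (t * Z ω)) ℙ)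
    (ε a : ℝ) (hε : 0 < ε) (hgε : g (1 / 2 + ε) < 0) (hε2 : 2 * ε ≤ 1)
    (ha : a = -g (1 / 2 + ε)) :
    ∀ n : ℕ,
      (2 * ε) ^ (2 ^ n - 1) * (ℙ {ω | Z ω ≤ 0}).toReal ^ (2 ^ n)
        ≤ (ℙ {ω | Z ω ≤ -(n * a)}).toReal :=
  quicksort_left_tail_iterated_lower_bound_general Z Z' Z'' U g hg hUm hZ' hZ'' hU hindep hrec ε a
    hε hε2 ha
end
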